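/- arXiv:1701.02570 — 6 statements merged into one kernel-verified Lean document; each statement's English description precedes it below -/
import Mathlib

section
/- Let ω_1,…,ω_n be a gauge of a connection over ℝⁿ, x ∈ ℝⁿ, and let a : ℝⁿ → GL_q(ℂ) be a gauge transformation with a(x) = I. Let ω'_k = a⁻¹ ω_k a + a⁻¹ ∂_k a be the transformed gauge, with curvature components Ω'_{ij}. Define F(γ) = (1/2) Σ_{i,j} Ω_{ij}(x) ∫_γ (z_i − x_i) dz_j + (1/3) Σ_{i,j,k} ( (∂_k Ω_{ij})(x) + [ω_k(x), Ω_{ij}(x)] ) ∫_γ (z_i − x_i)(z_k − x_k) dz_j, and let F' be the same expression built from ω', Ω'. Then F'(γ) = F(γ) for every Lipschitz loop γ based at x; that is, F is independent of the choice of gauge with the same value at x. -/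
open MeasureTheory Set

noncomputable section

attribute [local instance] Matrix.frobeniusNormedAddCommGroup Matrix.frobeniusNormedRing
  Matrix.frobeniusNormedSpace

/-- The algebra of `q × q` complex matrices, equipped (locally) with the Frobenius norm,
which is submultiplicative. -/
abbrev Mat (q : ℕ) := Matrix (Fin q) (Fin q) ℂ

/-- `ℝⁿ` with the Euclidean norm. -/
abbrev Euc (n : ℕ) := EuclideanSpace ℝ (Fin n)

/-- The partial derivative `∂ₖ f` of a matrix-valued map on `ℝⁿ`. -/
def pd {q n : ℕ} (f : Euc n → Mat q) (k : Fin n) (z : Euc n) : Mat q :=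
  fderiv ℝ f z (EuclideanSpace.single k 1)

/-- The curvature components `Ω i j = ∂_i ω_j - ∂_j ω_i + [ω_i, ω_j]` of a gauge `ω`. -/
def curv {q n : ℕ} (ω : Fin n → Euc n → Mat q) (i j : Fin n) (z : Euc n) : Mat q :=
  pd (ω j) i z - pd (ω i) j z + (ω i z * ω j z - ω j z * ω i z)

/-- The covariant derivative `∇ₖ Φ = ∂ₖ Φ + [ωₖ, Φ]`. -/
def covD {q n : ℕ} (ω : Fin n → Euc n → Mat q) (k : Fin n) (Φ : Euc n → Mat q) :
    Euc n → Mat q :=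
  fun z => pd Φ k z + (ω k z * Φ z - Φ z * ω k z)

/-- The iterated covariant derivative `∇_μ Φ = ∇_{μ₁} ⋯ ∇_{μⱼ} Φ` for a tuple
`μ = (μ₁, …, μⱼ)`, encoded as a list. -/
def covDIter {q n : ℕ} (ω : Fin n → Euc n → Mat q) (μ : List (Fin n))
    (Φ : Euc n → Mat q) : Euc n → Mat q :=
  μ.foldr (fun k Ψ => covD ω k Ψ) Φ

/-- The length `ℓ(γ) = ∫₀¹ |γ'(t)| dt` of a (Lipschitz) curve. -/
def len {n : ℕ} (γ : ℝ → Euc n) : ℝ := ∫ t in (0:ℝ)..1, ‖deriv γ t‖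

/-- The integral `∫_{disk(γ)} α = ∫₀¹∫₀¹ s Σ_{i,j} α_{ij}(x + s(γ(t)-x)) (γᵢ(t)-xᵢ) γⱼ'(t) ds dt`
of the two-form with components `α` over the radial disk of `γ` centered at `x`. -/
def diskInt {q n : ℕ} (α : Fin n → Fin n → Euc n → Mat q) (x : Euc n) (γ : ℝ → Euc n) :
    Mat q :=
  ∫ s in (0:ℝ)..1, ∫ t in (0:ℝ)..1,
    s • ∑ i, ∑ j, ((γ t i - x i) * deriv (fun u => γ u j) t) •
      α i j (x + s • (γ t - x))

/-- `a : [0,1] → M_q(ℂ)` solves (in integral form) the holonomy ODE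
`a' = -(Σᵢ ωᵢ(γ(t)) γᵢ'(t)) a`, `a(0) = I`; the holonomy of `γ` is then `a 1`. -/
def IsHolSol {q n : ℕ} (ω : Fin n → Euc n → Mat q) (γ : ℝ → Euc n) (a : ℝ → Mat q) : Prop :=
  Continuous a ∧ a 0 = 1 ∧ ∀ t ∈ Icc (0:ℝ) 1,
    a t = 1 - ∫ s in (0:ℝ)..t, (∑ i, deriv (fun u => γ u i) s • ω i (γ s)) * a s

/-- `γ` is a Lipschitz loop based at `x`. -/
def IsLoopAt {n : ℕ} (γ : ℝ → Euc n) (x : Euc n) : Prop :=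
  (∃ K : NNReal, LipschitzOnWith K γ (Icc 0 1)) ∧ γ 0 = x ∧ γ 1 = x

/-- The holonomy approximation functional
`F(γ) = ½ Σ_{ij} Ω_{ij}(x) ∫_γ (zᵢ-xᵢ)dz_j
      + ⅓ Σ_{ijk} ((∂ₖΩ_{ij})(x) + [ωₖ(x), Ω_{ij}(x)]) ∫_γ (zᵢ-xᵢ)(zₖ-xₖ)dz_j`
built from a gauge `ω`. -/
def Ffun {q n : ℕ} (ω : Fin n → Euc n → Mat q) (x : Euc n) (γ : ℝ → Euc n) : Mat q :=
  (1/2 : ℝ) • (∑ i, ∑ j,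
    (∫ t in (0:ℝ)..1, (γ t i - x i) * deriv (fun u => γ u j) t) • curv ω i j x) +
  (1/3 : ℝ) • (∑ i, ∑ j, ∑ k,
    (∫ t in (0:ℝ)..1, (γ t i - x i) * (γ t k - x k) * deriv (fun u => γ u j) t) •
      (pd (curv ω i j) k x + (ω k x * curv ω i j x - curv ω i j x * ω k x)))

-- auxiliary lemmas

attribute [local instance] Matrix.frobeniusNormedAlgebra

section Aux

variable {q n : ℕ}

lemma pd_add {f g : Euc n → Mat q} {k : Fin n} {z : Euc n}
    (hf : DifferentiableAt ℝ f z) (hg : DifferentiableAt ℝ g z) :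
    pd (fun w => f w + g w) k z = pd f k z + pd g k z := by
  unfold pd
  erw [fderiv_fun_add hf hg]
  rfl

lemma pd_mul {f g : Euc n → Mat q} {k : Fin n} {z : Euc n}
    (hf : DifferentiableAt ℝ f z) (hg : DifferentiableAt ℝ g z) :
    pd (fun w => f w * g w) k z = pd f k z * g z + f z * pd g k z := by
  unfold pd
  erw [fderiv_fun_mul' hf hg]
  exact add_comm (f z * fderiv ℝ g z (EuclideanSpace.single k 1)) _

lemma pd_mul3 {f g h : Euc n → Mat q} {k : Fin n} {z : Euc n}
    (hf : DifferentiableAt ℝ f z) (hg : DifferentiableAt ℝ g z)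
    (hh : DifferentiableAt ℝ h z) :
    pd (fun w => f w * g w * h w) k z
      = pd f k z * g z * h z + f z * pd g k z * h z + f z * g z * pd h k z := by
  have h1 : pd (fun w => f w * g w * h w) k z
      = pd (fun w => f w * g w) k z * h z + (f z * g z) * pd h k z :=
    pd_mul (hf.mul hg) hh
  rw [h1, pd_mul hf hg, add_mul]

lemma pd_const {c : Mat q} {k : Fin n} {z : Euc n} :
    pd (fun _ : Euc n => c) k z = 0 := by
  unfold pd
  rw [fderiv_fun_const]
  simp

lemma cd_pd {f : Euc n → Mat q} (hf : ContDiff ℝ (⊤ : ℕ∞) f) (k : Fin n) :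
    ContDiff ℝ (⊤ : ℕ∞) (pd f k) := by
  show ContDiff ℝ (⊤ : ℕ∞) (fun z => fderiv ℝ f z (EuclideanSpace.single k 1))
  exact (hf.fderiv_right (by simp)).clm_apply contDiff_const

lemma alg {R : Type*} [Ring R] (A B Wi Wj Pi' Pj Ei Ej S : R) (hAB : A * B = 1) :
    (-(B * Pi' * B) * Wj * A + B * Ej * A + (B * Wj) * Pi'
        + (-(B * Pi' * B) * Pj + B * S))
      - (-(B * Pj * B) * Wi * A + B * Ei * A + (B * Wi) * Pj
        + (-(B * Pj * B) * Pi' + B * S))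
      + ((B * Wi * A + B * Pi') * (B * Wj * A + B * Pj)
        - (B * Wj * A + B * Pj) * (B * Wi * A + B * Pi'))
      = B * (Ej - Ei + (Wi * Wj - Wj * Wi)) * A := by
  have hA : ∀ X : R, A * (B * X) = X := fun X => by rw [← mul_assoc, hAB, one_mul]
  simp only [mul_add, add_mul, mul_sub, sub_mul, neg_mul, mul_neg, mul_assoc, hA]
  abel

end Aux

/-- The functional `F` is independent of the choice of gauge: if a smooth
gauge transformation `a : ℝⁿ → GL_q(ℂ)` with `a(x) = I` transforms `ω` into
`ω'ₖ = a⁻¹ ωₖ a + a⁻¹ ∂ₖ a`, then the functional `F'` built from `ω'` agrees with `F`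
on every Lipschitz loop based at `x`. -/
theorem stmt2 (q n : ℕ) (hq : 1 ≤ q) (hn : 1 ≤ n)
    (ω : Fin n → Euc n → Mat q) (hω : ∀ i, ContDiff ℝ (⊤ : ℕ∞) (ω i))
    (x : Euc n)
    (a : Euc n → Mat q) (ha : ContDiff ℝ (⊤ : ℕ∞) a) (haunit : ∀ z, IsUnit (a z))
    (hax : a x = 1)
    (ω' : Fin n → Euc n → Mat q)
    (hω' : ∀ k z, ω' k z = (a z)⁻¹ * ω k z * a z + (a z)⁻¹ * pd a k z) :
    ∀ γ : ℝ → Euc n, IsLoopAt γ x → Ffun ω' x γ = Ffun ω x γ := by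
  intro γ _
  -- the inverse gauge transformation
  set b : Euc n → Mat q := fun z => Ring.inverse (a z) with hbdef
  have hbC : ContDiff ℝ (⊤ : ℕ∞) b := by
    rw [contDiff_iff_contDiffAt]
    intro z
    have h1 : ContDiffAt ℝ (⊤ : ℕ∞) Ring.inverse (a z) := by
      have := contDiffAt_ringInverse (𝕜 := ℝ) (R := Mat q) (n := (⊤ : ℕ∞)) (haunit z).unit
      rwa [IsUnit.unit_spec] at this
    exact h1.comp z ha.contDiffAt
  have hba : ∀ z, b z * a z = 1 := fun z => Ring.inverse_mul_cancel _ (haunit z)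
  have hab : ∀ z, a z * b z = 1 := fun z => Ring.mul_inverse_cancel _ (haunit z)
  have hω'eq : ∀ k, ω' k = fun z => b z * ω k z * a z + b z * pd a k z := by
    intro k
    funext z
    rw [hω' k z, Matrix.nonsing_inv_eq_ringInverse]
  -- differentiability bookkeeping
  have haD : Differentiable ℝ a := ha.differentiable (by simp)
  have hbD : Differentiable ℝ b := hbC.differentiable (by simp)
  have hωD : ∀ m, Differentiable ℝ (ω m) := fun m => (hω m).differentiable (by simp)
  have hPaC : ∀ m, ContDiff ℝ (⊤ : ℕ∞) (pd a m) := fun m => cd_pd ha m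
  have hPaD : ∀ m, Differentiable ℝ (pd a m) := fun m => (hPaC m).differentiable (by simp)
  -- symmetry of second derivatives of a
  have hsym : ∀ (i j : Fin n) (z : Euc n), pd (pd a j) i z = pd (pd a i) j z := by
    intro i j z
    have h2 : HasFDerivAt (fderiv ℝ a) (fderiv ℝ (fderiv ℝ a) z) z :=
      (((ha.fderiv_right (m := (⊤ : ℕ∞)) (by simp)).differentiable (by simp)) z).hasFDerivAt
    have key := second_derivative_symmetric (f := a) (fun y => (haD y).hasFDerivAt) h2
      (EuclideanSpace.single i 1) (EuclideanSpace.single j 1)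
    have hc : ∀ v : Euc n, HasFDerivAt (fun w => fderiv ℝ a w v)
        ((ContinuousLinearMap.apply ℝ (Mat q) v).comp (fderiv ℝ (fderiv ℝ a) z)) z :=
      fun v => (ContinuousLinearMap.apply ℝ (Mat q) v).hasFDerivAt.comp z h2
    have ej : pd a j = fun w => fderiv ℝ a w (EuclideanSpace.single j 1) := rfl
    have ei : pd a i = fun w => fderiv ℝ a w (EuclideanSpace.single i 1) := rfl
    show fderiv ℝ (pd a j) z (EuclideanSpace.single i 1)
        = fderiv ℝ (pd a i) z (EuclideanSpace.single j 1)
    erw [ej, ei, (hc (EuclideanSpace.single j 1)).fderiv, (hc (EuclideanSpace.single i 1)).fderiv]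
    exact key
  -- derivative of the inverse
  have hpdb : ∀ (k : Fin n) (z : Euc n), pd b k z = -(b z * pd a k z * b z) := by
    intro k z
    have h1 : (fun w => a w * b w) = fun _ : Euc n => (1 : Mat q) := funext hab
    have h2 : pd (fun w => a w * b w) k z = pd a k z * b z + a z * pd b k z :=
      pd_mul (haD z) (hbD z)
    rw [h1, pd_const] at h2
    have h3 : a z * pd b k z = -(pd a k z * b z) := eq_neg_of_add_eq_zero_right h2.symm
    have h4 : b z * (a z * pd b k z) = b z * -(pd a k z * b z) := by rw [h3]
    rw [← mul_assoc, hba, one_mul] at h4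
    rw [h4, mul_neg, ← mul_assoc]
  -- expansion of the derivative of the transformed gauge
  have hpdω' : ∀ (i j : Fin n) (z : Euc n),
      pd (ω' j) i z = pd b i z * ω j z * a z + b z * pd (ω j) i z * a z
        + (b z * ω j z) * pd a i z + (pd b i z * pd a j z + b z * pd (pd a j) i z) := by
    intro i j z
    have hd1 : DifferentiableAt ℝ (fun w => b w * ω j w * a w) z :=
      ((hbD z).mul (hωD j z)).mul (haD z)
    have hd2 : DifferentiableAt ℝ (fun w => b w * pd a j w) z :=
      (hbD z).mul (hPaD j z)
    have h0 : pd (ω' j) i z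
        = pd (fun w => b w * ω j w * a w) i z + pd (fun w => b w * pd a j w) i z := by
      rw [hω'eq j]
      exact pd_add hd1 hd2
    rw [h0, pd_mul3 (hbD z) (hωD j z) (haD z), pd_mul (hbD z) (hPaD j z)]
  -- the curvature transforms covariantly
  have hcurv : ∀ (i j : Fin n) (z : Euc n), curv ω' i j z = b z * curv ω i j z * a z := by
    intro i j z
    have hω'z : ∀ m, ω' m z = b z * ω m z * a z + b z * pd a m z := fun m => by
      rw [hω'eq m]
    unfold curv
    rw [hpdω' i j z, hpdω' j i z, hω'z i, hω'z j, hpdb i z, hpdb j z, hsym j i z]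
    exact alg (a z) (b z) (ω i z) (ω j z) (pd a i z) (pd a j z)
      (pd (ω i) j z) (pd (ω j) i z) (pd (pd a j) i z) (hab z)
  -- values at the base point
  have hbx : b x = 1 := by rw [hbdef]; simp [hax]
  have hpdbx : ∀ k, pd b k x = -pd a k x := by
    intro k
    rw [hpdb k x, hbx, one_mul, mul_one]
  have hcurvx : ∀ i j, curv ω' i j x = curv ω i j x := by
    intro i j
    rw [hcurv i j x, hbx, hax, one_mul, mul_one]
  -- smoothness of the curvature
  have hcurvC : ∀ i j, ContDiff ℝ (⊤ : ℕ∞) (curv ω i j) := by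
    intro i j
    exact ((cd_pd (hω j) i).sub (cd_pd (hω i) j)).add
      (((hω i).mul (hω j)).sub ((hω j).mul (hω i)))
  -- derivative of the transformed curvature at the base point
  have hpdcurv : ∀ (i j k : Fin n),
      pd (curv ω' i j) k x
        = -(pd a k x * curv ω i j x) + pd (curv ω i j) k x + curv ω i j x * pd a k x := by
    intro i j k
    have hfun : curv ω' i j = fun z => b z * curv ω i j z * a z := funext (hcurv i j)
    have h1 : pd (curv ω' i j) k x
        = pd b k x * curv ω i j x * a x + b x * pd (curv ω i j) k x * a x
          + b x * curv ω i j x * pd a k x := by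
      rw [hfun]
      exact pd_mul3 (hbD x) ((hcurvC i j).differentiable (by simp) x) (haD x)
    rw [h1, hbx, hax, hpdbx k, one_mul, one_mul, mul_one, mul_one, neg_mul]
  -- value of the transformed gauge at the base point
  have hω'x : ∀ k, ω' k x = ω k x + pd a k x := by
    intro k
    rw [hω' k x, hax, inv_one, one_mul, one_mul, mul_one]
  -- the combination appearing in Ffun is gauge invariant
  have hkey : ∀ i j k : Fin n,
      pd (curv ω' i j) k x + (ω' k x * curv ω' i j x - curv ω' i j x * ω' k x)
        = pd (curv ω i j) k x + (ω k x * curv ω i j x - curv ω i j x * ω k x) := by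
    intro i j k
    rw [hpdcurv i j k, hcurvx i j, hω'x k]
    noncomm_ring
  -- assemble
  unfold Ffun
  have s1 : (∑ i, ∑ j,
      (∫ t in (0:ℝ)..1, (γ t i - x i) * deriv (fun u => γ u j) t) • curv ω' i j x)
      = ∑ i, ∑ j,
      (∫ t in (0:ℝ)..1, (γ t i - x i) * deriv (fun u => γ u j) t) • curv ω i j x :=
    Finset.sum_congr rfl fun i _ => Finset.sum_congr rfl fun j _ => by rw [hcurvx i j]
  have s2 : (∑ i, ∑ j, ∑ k,
      (∫ t in (0:ℝ)..1, (γ t i - x i) * (γ t k - x k) * deriv (fun u => γ u j) t) •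
        (pd (curv ω' i j) k x + (ω' k x * curv ω' i j x - curv ω' i j x * ω' k x)))
      = ∑ i, ∑ j, ∑ k,
      (∫ t in (0:ℝ)..1, (γ t i - x i) * (γ t k - x k) * deriv (fun u => γ u j) t) •
        (pd (curv ω i j) k x + (ω k x * curv ω i j x - curv ω i j x * ω k x)) :=
    Finset.sum_congr rfl fun i _ => Finset.sum_congr rfl fun j _ =>
      Finset.sum_congr rfl fun k _ => by rw [hkey i j k]
  rw [s1, s2]

end
end

section
/- Let E be a finite-dimensional normed real vector space, let m ≥ 2 be an integer, and let α_{ij} : ℝⁿ → E (1 ≤ i, j ≤ n) be smooth maps with α_{ij} = −α_{ji}, such that there exist K, r > 0 with ‖α_{ij}(z)‖ ≤ K |z|^{m−2} for all i, j and all |z| ≤ r. For a loop γ based at 0 define Φ(γ) = ∫₀¹ ∫₀¹ s Σ_{i,j=1}^n α_{ij}(s γ(t)) γ_i(t) γ_j'(t) ds dt (the integral of the 2-form with components α_{ij} over the radial disk of γ). Then there exist ε > 0 and C ≥ 0 such that ‖Φ(γ)‖ ≤ C · ℓ(γ)^m for every loop γ based at 0 with ℓ(γ) < ε. -/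
open MeasureTheory Set

noncomputable section

namespace Stmt7Aux

variable {n : ℕ}

lemma abs_coord_le (x : Euc n) (i : Fin n) : |x i| ≤ ‖x‖ := by
  rw [EuclideanSpace.norm_eq]
  have h1 : |x i| = Real.sqrt (|x i| ^ 2) := (Real.sqrt_sq (abs_nonneg _)).symm
  rw [h1]
  apply Real.sqrt_le_sqrt
  rw [sq_abs]
  have := Finset.single_le_sum (f := fun j => ‖x j‖ ^ 2) (fun j _ => sq_nonneg _)
    (Finset.mem_univ i)
  simpa [Real.norm_eq_abs, sq_abs] using this

lemma norm_deriv_le_lip {f : ℝ → Euc n} {L : NNReal} (hf : LipschitzWith L f) (u : ℝ) :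
    ‖deriv f u‖ ≤ L := by
  by_cases h : DifferentiableAt ℝ f u
  · have ht := hasDerivAt_iff_tendsto_slope.1 h.hasDerivAt
    have hbd : ∀ v ∈ ({u}ᶜ : Set ℝ), ‖slope f u v‖ ≤ (L : ℝ) := by
      intro v hv
      have hvu : v ≠ u := hv
      rw [slope_def_module, norm_smul]
      have h2 : ‖f v - f u‖ ≤ (L : ℝ) * ‖v - u‖ := by
        simpa [dist_eq_norm] using hf.dist_le_mul v u
      have h3 : ‖(v - u)⁻¹‖ = |v - u|⁻¹ := by simp [Real.norm_eq_abs]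
      rw [h3]
      have h4 : (0:ℝ) < |v - u| := by
        simp [abs_pos, sub_ne_zero.2 hvu]
      calc |v - u|⁻¹ * ‖f v - f u‖ ≤ |v - u|⁻¹ * ((L:ℝ) * |v - u|) := by
            apply mul_le_mul_of_nonneg_left _ (by positivity)
            simpa [Real.norm_eq_abs] using h2
        _ = (L : ℝ) := by field_simp
    refine le_of_tendsto ht.norm ?_
    filter_upwards [self_mem_nhdsWithin] with v hv using hbd v hv
  · simp [deriv_zero_of_not_differentiableAt h]

lemma intInt_norm_deriv {f : ℝ → Euc n} {L : NNReal} (hf : LipschitzWith L f) (p q : ℝ) :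
    IntervalIntegrable (fun u => ‖deriv f u‖) volume p q := by
  rw [intervalIntegrable_iff]
  haveI : IsFiniteMeasure (volume.restrict (uIoc p q)) :=
    ⟨by rw [Measure.restrict_apply_univ]; exact measure_Ioc_lt_top⟩
  refine Integrable.mono' (g := fun _ => (L : ℝ)) (integrable_const _)
    ((measurable_deriv f).norm.aestronglyMeasurable.restrict) ?_
  exact ae_of_all _ fun u => by
    simpa [Real.norm_eq_abs, abs_of_nonneg (norm_nonneg _)] using norm_deriv_le_lip hf u

set_option maxHeartbeats 2000000 in
lemma lip_ftc {f : ℝ → Euc n} {L : NNReal} (hf : LipschitzWith L f) {a b : ℝ} (hab : a ≤ b) :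
    ‖f b - f a‖ ≤ ∫ u in a..b, ‖deriv f u‖ := by
  have hLd : ∀ u, ‖deriv f u‖ ≤ (L : ℝ) := norm_deriv_le_lip hf
  have hmeas : Measurable (deriv f) := measurable_deriv f
  have hfc : Continuous f := hf.continuous
  have hIntN := intInt_norm_deriv hf
  set ℓab : ℝ := ∫ u in a..b, ‖deriv f u‖ with hℓab
  refine le_of_forall_pos_le_add fun ε hε => ?_
  set δ : ℝ := ε / (4 * ((L : ℝ) + 1)) with hδdef
  have hδ : 0 < δ := by positivity
  set ρ : ContDiffBump (0 : ℝ) := ⟨δ/2, δ, by positivity, by linarith⟩ with hρ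
  set φ : ℝ → ℝ := ρ.normed volume with hφ
  have hφc : Continuous φ := ρ.continuous_normed
  have hφcs : HasCompactSupport φ := ρ.hasCompactSupport_normed
  have hφnn : ∀ s, 0 ≤ φ s := ρ.nonneg_normed
  have hφint : Integrable φ := ρ.integrable_normed
  have hφ1 : ∫ s, φ s = 1 := ρ.integral_normed
  have hφsupp : ∀ s : ℝ, φ s ≠ 0 → |s| < δ := by
    intro s hs
    have : s ∈ Function.support φ := hs
    rw [hφ, ρ.support_normed_eq] at this
    simpa [hρ, Real.dist_eq] using mem_ball_iff_norm.1 this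
  -- integrability of the convolution integrands
  have hint1 : ∀ t : ℝ, Integrable (fun s => φ s • f (t - s)) := by
    intro t
    refine Continuous.integrable_of_hasCompactSupport
      (hφc.smul (hfc.comp (continuous_const.sub continuous_id))) ?_
    exact hφcs.smul_right
  have hint2 : ∀ t : ℝ, Integrable (fun s => φ s • deriv f (t - s)) := by
    intro t
    refine Integrable.mono' (g := fun s => φ s * (L : ℝ)) (hφint.mul_const _)
      (hφc.aestronglyMeasurable.smul
        ((hmeas.comp (measurable_const.sub measurable_id)).aestronglyMeasurable)) ?_
    refine ae_of_all _ fun s => ?_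
    rw [norm_smul, Real.norm_eq_abs, abs_of_nonneg (hφnn s)]
    exact mul_le_mul_of_nonneg_left (hLd _) (hφnn s)
  set g : ℝ → Euc n := fun t => ∫ s, φ s • f (t - s) with hg
  set d : ℝ → Euc n := fun t => ∫ s, φ s • deriv f (t - s) with hd
  -- Rademacher a.e. differentiability, transported
  have hae : ∀ᵐ x : ℝ, DifferentiableAt ℝ f x := hf.ae_differentiableAt
  have haet : ∀ t : ℝ, ∀ᵐ s : ℝ, DifferentiableAt ℝ f (t - s) := by
    intro t
    have hqmp := (Measure.measurePreserving_sub_left volume t).quasiMeasurePreserving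
    rw [ae_iff] at hae ⊢
    exact hqmp.preimage_null hae
  -- g has derivative d everywhere
  have hg' : ∀ t : ℝ, HasDerivAt g (d t) t := by
    intro t
    rw [hasDerivAt_iff_tendsto_slope]
    have key : Filter.Tendsto (fun u => ∫ s, φ s • ((u - t)⁻¹ • (f (u - s) - f (t - s))))
        (nhdsWithin t {t}ᶜ) (nhds (d t)) := by
      apply tendsto_integral_filter_of_dominated_convergence (bound := fun s => φ s * (L : ℝ))
      · filter_upwards with u
        exact (hφc.smul ((((hfc.comp (continuous_const.sub continuous_id)).sub
          (hfc.comp (continuous_const.sub continuous_id)))).const_smul (u - t)⁻¹)).aestronglyMeasurable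
      · filter_upwards [self_mem_nhdsWithin] with u hu
        refine ae_of_all _ fun s => ?_
        have hut : u ≠ t := hu
        have h4 : (0:ℝ) < |u - t| := by simp [abs_pos, sub_ne_zero.2 hut]
        rw [norm_smul, norm_smul, Real.norm_eq_abs, abs_of_nonneg (hφnn s)]
        refine mul_le_mul_of_nonneg_left ?_ (hφnn s)
        have h2 : ‖f (u - s) - f (t - s)‖ ≤ (L : ℝ) * |u - t| := by
          have := hf.dist_le_mul (u - s) (t - s)
          simpa [dist_eq_norm, sub_sub_sub_cancel_right] using this
        calc ‖(u - t)⁻¹‖ * ‖f (u - s) - f (t - s)‖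
            ≤ |u - t|⁻¹ * ((L : ℝ) * |u - t|) := by
              rw [Real.norm_eq_abs, abs_inv]
              exact mul_le_mul_of_nonneg_left h2 (by positivity)
          _ = (L : ℝ) := by field_simp
      · exact hφint.mul_const _
      · filter_upwards [haet t] with s hs
        have h1 : HasDerivAt (fun u => f (u - s)) (deriv f (t - s)) t :=
          HasDerivAt.comp_sub_const t s hs.hasDerivAt
        have h3 := hasDerivAt_iff_tendsto_slope.1 h1
        have h5 := h3.const_smul (φ s)
        refine h5.congr fun u => ?_
        rw [slope_def_module]
    refine key.congr' ?_
    filter_upwards [self_mem_nhdsWithin] with u hu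
    have hut : u ≠ t := hu
    have e1 : g u - g t = ∫ s, (φ s • f (u - s) - φ s • f (t - s)) :=
      (integral_sub (hint1 u) (hint1 t)).symm
    rw [slope_def_module, e1, ← integral_smul]
    apply integral_congr_ae
    refine ae_of_all _ fun s => ?_
    dsimp only
    rw [smul_comm, smul_sub]
  have hderiv_g : deriv g = d := funext fun t => (hg' t).deriv
  -- bound on d
  have hdle : ∀ u : ℝ, ‖d u‖ ≤ ∫ s, φ s * ‖deriv f (u - s)‖ := by
    intro u
    refine le_trans (norm_integral_le_integral_norm _) (le_of_eq (integral_congr_ae ?_))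
    refine ae_of_all _ fun s => ?_
    dsimp only
    rw [norm_smul, Real.norm_eq_abs, abs_of_nonneg (hφnn s)]
  have hIs : ∀ u : ℝ, Integrable (fun s => φ s * ‖deriv f (u - s)‖) := by
    intro u
    have := (hint2 u).norm
    refine this.congr (ae_of_all _ fun s => ?_)
    dsimp only
    rw [norm_smul, Real.norm_eq_abs, abs_of_nonneg (hφnn s)]
  have hdL : ∀ u : ℝ, ‖d u‖ ≤ (L : ℝ) := by
    intro u
    refine (hdle u).trans ?_
    calc ∫ s, φ s * ‖deriv f (u - s)‖ ≤ ∫ s, φ s * (L : ℝ) := by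
          refine integral_mono (hIs u) (hφint.mul_const _) fun s => ?_
          exact mul_le_mul_of_nonneg_left (hLd _) (hφnn s)
      _ = (L : ℝ) := by rw [integral_mul_const, hφ1, one_mul]
  have hIntd : IntervalIntegrable d volume a b := by
    rw [intervalIntegrable_iff]
    haveI : IsFiniteMeasure (volume.restrict (uIoc a b)) :=
      ⟨by rw [Measure.restrict_apply_univ]; exact measure_Ioc_lt_top⟩
    refine Integrable.mono' (g := fun _ => (L : ℝ)) (integrable_const _) ?_
      (ae_of_all _ fun u => hdL u)
    rw [← hderiv_g]
    exact (measurable_deriv g).aestronglyMeasurable.restrict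
  have hftc : ∫ u in a..b, d u = g b - g a :=
    intervalIntegral.integral_eq_sub_of_hasDerivAt (fun x _ => hg' x) hIntd
  -- translation bound
  have hshift : ∀ s : ℝ, ∫ u in (a-s)..(b-s), ‖deriv f u‖ ≤ ℓab + 2 * (L:ℝ) * |s| := by
    intro s
    have h1 := intervalIntegral.integral_add_adjacent_intervals (hIntN (a-s) a) (hIntN a (b-s))
    have h2 := intervalIntegral.integral_add_adjacent_intervals (hIntN a b) (hIntN b (b-s))
    have hC : ∀ x : ℝ, x ∈ uIoc (a-s) a → ‖‖deriv f x‖‖ ≤ (L:ℝ) := fun x _ => by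
      simpa [Real.norm_eq_abs, abs_of_nonneg (norm_nonneg _)] using hLd x
    have hC2 : ∀ x : ℝ, x ∈ uIoc b (b-s) → ‖‖deriv f x‖‖ ≤ (L:ℝ) := fun x _ => by
      simpa [Real.norm_eq_abs, abs_of_nonneg (norm_nonneg _)] using hLd x
    have hb1 := intervalIntegral.norm_integral_le_of_norm_le_const hC
    have hb2 := intervalIntegral.norm_integral_le_of_norm_le_const hC2
    have e1 : a - (a - s) = s := by ring
    have e2 : b - s - b = -s := by ring
    rw [e1, Real.norm_eq_abs] at hb1
    rw [e2, abs_neg, Real.norm_eq_abs] at hb2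
    have hA := le_abs_self (∫ u in (a-s)..a, ‖deriv f u‖)
    have hB := le_abs_self (∫ u in b..(b-s), ‖deriv f u‖)
    have : ∫ u in (a-s)..(b-s), ‖deriv f u‖
        = (∫ u in (a-s)..a, ‖deriv f u‖) + (∫ u in a..b, ‖deriv f u‖)
          + ∫ u in b..(b-s), ‖deriv f u‖ := by
      rw [← h1, ← h2]; ring
    rw [this]
    have hLnn : (0:ℝ) ≤ (L:ℝ) := L.2
    linarith
  -- Fubini
  haveI : IsFiniteMeasure (volume.restrict (Ioc a b)) :=
    ⟨by rw [Measure.restrict_apply_univ]; exact measure_Ioc_lt_top⟩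
  have hHmeas : AEStronglyMeasurable (fun p : ℝ × ℝ => φ p.2 * ‖deriv f (p.1 - p.2)‖)
      ((volume.restrict (Ioc a b)).prod volume) :=
    ((hφc.measurable.comp measurable_snd).mul
      ((hmeas.norm).comp (measurable_fst.sub measurable_snd))).aestronglyMeasurable
  have hHint : Integrable (fun p : ℝ × ℝ => φ p.2 * ‖deriv f (p.1 - p.2)‖)
      ((volume.restrict (Ioc a b)).prod volume) := by
    refine Integrable.mono' (g := fun p : ℝ × ℝ => (1:ℝ) * (φ p.2 * (L:ℝ))) ?_ hHmeas ?_
    · exact Integrable.mul_prod (integrable_const (μ := volume.restrict (Ioc a b)) (1:ℝ)) (hφint.mul_const _)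
    · refine ae_of_all _ fun p => ?_
      rw [one_mul, Real.norm_eq_abs, abs_of_nonneg (mul_nonneg (hφnn _) (norm_nonneg _))]
      exact mul_le_mul_of_nonneg_left (hLd _) (hφnn _)
  have hswap := integral_integral_swap (f := fun u s => φ s * ‖deriv f (u - s)‖) hHint
  have hIbound : ∫ u in a..b, ‖d u‖ ≤ ℓab + 2 * (L:ℝ) * δ := by
    have int2 : IntervalIntegrable (fun u => ∫ s, φ s * ‖deriv f (u - s)‖) volume a b := by
      rw [intervalIntegrable_iff_integrableOn_Ioc_of_le hab]
      exact hHint.integral_prod_left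
    have step1 : ∫ u in a..b, ‖d u‖ ≤ ∫ u in a..b, ∫ s, φ s * ‖deriv f (u - s)‖ :=
      intervalIntegral.integral_mono_on hab hIntd.norm int2 (fun u _ => hdle u)
    have inner_eq : ∀ s : ℝ, (∫ u in Ioc a b, φ s * ‖deriv f (u - s)‖)
        = φ s * ∫ u in (a-s)..(b-s), ‖deriv f u‖ := by
      intro s
      rw [integral_const_mul]
      congr 1
      rw [← intervalIntegral.integral_of_le hab]
      exact intervalIntegral.integral_comp_sub_right (fun v => ‖deriv f v‖) s
    have step2 : ∫ u in a..b, (∫ s, φ s * ‖deriv f (u - s)‖)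
        = ∫ s, φ s * ∫ u in (a-s)..(b-s), ‖deriv f u‖ := by
      rw [intervalIntegral.integral_of_le hab, hswap]
      exact integral_congr_ae (ae_of_all _ fun s => inner_eq s)
    have i1 : Integrable (fun s => φ s * ∫ u in (a-s)..(b-s), ‖deriv f u‖) := by
      refine (hHint.integral_prod_right).congr (ae_of_all _ fun s => ?_)
      exact inner_eq s
    have step3 : ∫ s, φ s * ∫ u in (a-s)..(b-s), ‖deriv f u‖
        ≤ ∫ s, φ s * (ℓab + 2*(L:ℝ)*δ) := by
      refine integral_mono i1 (hφint.mul_const _) fun s => ?_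
      dsimp only
      rcases eq_or_ne (φ s) 0 with h|h
      · simp [h]
      · have hsδ := hφsupp s h
        refine mul_le_mul_of_nonneg_left ((hshift s).trans ?_) (hφnn s)
        have hLnn : (0:ℝ) ≤ (L:ℝ) := L.2
        nlinarith [abs_nonneg s]
    have step4 : ∫ s, φ s * (ℓab + 2*(L:ℝ)*δ) = ℓab + 2*(L:ℝ)*δ := by
      rw [integral_mul_const, hφ1, one_mul]
    linarith
  -- approximation of f by g
  have happrox : ∀ t : ℝ, ‖g t - f t‖ ≤ (L:ℝ) * δ := by
    intro t
    have e0 : f t = ∫ s, φ s • f t := by rw [integral_smul_const, hφ1, one_smul]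
    have e1 : g t - f t = ∫ s, φ s • (f (t - s) - f t) := by
      calc g t - f t = (∫ s, φ s • f (t - s)) - ∫ s, φ s • f t := by rw [← e0]
        _ = ∫ s, (φ s • f (t - s) - φ s • f t) := (integral_sub (hint1 t) (hφint.smul_const _)).symm
        _ = ∫ s, φ s • (f (t - s) - f t) := by
            exact integral_congr_ae (ae_of_all _ fun s => by dsimp only; rw [smul_sub])
    rw [e1]
    refine le_trans (norm_integral_le_integral_norm _) ?_
    have hnint : Integrable (fun s => ‖φ s • (f (t - s) - f t)‖) := by
      refine ((hint1 t).sub (hφint.smul_const (f t))).norm.congr (ae_of_all _ fun s => ?_)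
      simp only [Pi.sub_apply, smul_sub]
    have hmain : ∫ s, ‖φ s • (f (t - s) - f t)‖ ≤ ∫ s, φ s * ((L:ℝ) * δ) := by
      refine integral_mono hnint (hφint.mul_const _) fun s => ?_
      dsimp only
      rw [norm_smul, Real.norm_eq_abs, abs_of_nonneg (hφnn s)]
      rcases eq_or_ne (φ s) 0 with h|h
      · simp [h]
      · have hsδ := hφsupp s h
        refine mul_le_mul_of_nonneg_left ?_ (hφnn s)
        have hd1 : ‖f (t - s) - f t‖ ≤ (L:ℝ) * |s| := by
          have := hf.dist_le_mul (t - s) t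
          simpa [dist_eq_norm, sub_sub_cancel_left, abs_neg] using this
        have hLnn : (0:ℝ) ≤ (L:ℝ) := L.2
        nlinarith [abs_nonneg s]
    refine hmain.trans (le_of_eq ?_)
    rw [integral_mul_const, hφ1, one_mul]
  -- assemble
  have hgba : ‖g b - g a‖ ≤ ℓab + 2*(L:ℝ)*δ := by
    rw [← hftc]
    exact le_trans (intervalIntegral.norm_integral_le_integral_norm hab) hIbound
  have hfb : ‖f b - f a‖ ≤ ‖g b - g a‖ + ‖g b - f b‖ + ‖g a - f a‖ := by
    have e : f b - f a = ((g b - g a) - (g b - f b)) + (g a - f a) := by abel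
    rw [e]
    refine le_trans (norm_add_le _ _) ?_
    exact add_le_add (norm_sub_le _ _) le_rfl
  have hδε : 4*(L:ℝ)*δ ≤ ε := by
    have hLnn : (0:ℝ) ≤ (L:ℝ) := L.2
    rw [hδdef]
    have h1 : (0:ℝ) < 4 * ((L:ℝ) + 1) := by positivity
    calc 4*(L:ℝ) * (ε / (4 * ((L:ℝ) + 1))) ≤ 4*((L:ℝ)+1) * (ε / (4 * ((L:ℝ) + 1))) := by
          refine mul_le_mul_of_nonneg_right (by linarith) (by positivity)
      _ = ε := by field_simp
    -- done
  have h1 := happrox a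
  have h2 := happrox b
  linarith

end Stmt7Aux

set_option maxHeartbeats 2000000 in
/-- Let `α_{ij} : ℝⁿ → E` be smooth, antisymmetric in `(i,j)` and satisfy
`‖α_{ij}(z)‖ ≤ K |z|^(m-2)` for `|z| ≤ r`.  Then the integral
`Φ(γ) = ∫₀¹∫₀¹ s Σ_{ij} α_{ij}(sγ(t)) γᵢ(t) γⱼ'(t) ds dt` of the two-form `α` over the radial
disk of a loop `γ` based at `0` satisfies `‖Φ(γ)‖ ≤ C ℓ(γ)^m` for short loops. -/
theorem stmt7 (n : ℕ) (hn : 1 ≤ n)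
    {E : Type*} [NormedAddCommGroup E] [NormedSpace ℝ E] [FiniteDimensional ℝ E]
    (m : ℕ) (hm : 2 ≤ m)
    (α : Fin n → Fin n → Euc n → E) (hα : ∀ i j, ContDiff ℝ (⊤ : ℕ∞) (α i j))
    (hanti : ∀ i j z, α i j z = -α j i z)
    (K r : ℝ) (hK : 0 < K) (hr : 0 < r)
    (hbound : ∀ i j : Fin n, ∀ z : Euc n, ‖z‖ ≤ r → ‖α i j z‖ ≤ K * ‖z‖ ^ (m - 2)) :
    ∃ ε > (0:ℝ), ∃ C ≥ (0:ℝ), ∀ γ : ℝ → Euc n,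
      (∃ L : NNReal, LipschitzOnWith L γ (Icc 0 1)) → γ 0 = 0 → γ 1 = 0 →
      (∫ t in (0:ℝ)..1, ‖deriv γ t‖) < ε →
      ‖∫ s in (0:ℝ)..1, ∫ t in (0:ℝ)..1,
          s • ∑ i, ∑ j, (γ t i * deriv (fun u => γ u j) t) • α i j (s • γ t)‖ ≤
        C * (∫ t in (0:ℝ)..1, ‖deriv γ t‖) ^ m := by
  refine ⟨r, hr, (n:ℝ)^2 * K, by positivity, ?_⟩
  intro γ hLipEx hγ0 hγ1 hℓr
  obtain ⟨L, hLip⟩ := hLipEx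
  set ℓ : ℝ := ∫ t in (0:ℝ)..1, ‖deriv γ t‖ with hℓ
  -- the Lipschitz extension of γ by projection onto [0,1]
  set γt : ℝ → Euc n := fun u => γ ((projIcc (0:ℝ) 1 zero_le_one u : Icc (0:ℝ) 1) : ℝ) with hγt
  have hγtlip : LipschitzWith L γt := by
    refine LipschitzWith.of_dist_le_mul fun x y => ?_
    have h1 := hLip.dist_le_mul _ (projIcc (0:ℝ) 1 zero_le_one x).2 _
      (projIcc (0:ℝ) 1 zero_le_one y).2
    refine h1.trans (mul_le_mul_of_nonneg_left ?_ L.2)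
    have h2 := (LipschitzWith.projIcc (zero_le_one (α := ℝ))).dist_le_mul x y
    simpa [Subtype.dist_eq, one_mul] using h2
  have hagree : ∀ u ∈ Icc (0:ℝ) 1, γt u = γ u := fun u hu => by
    rw [hγt]; dsimp only; rw [projIcc_of_mem _ hu]
  have hev : ∀ t ∈ Ioo (0:ℝ) 1, γt =ᶠ[nhds t] γ := fun t ht =>
    Filter.eventually_of_mem (Ioo_mem_nhds ht.1 ht.2)
      (fun u hu => hagree u (Ioo_subset_Icc_self hu))
  have hdeq : ∀ t ∈ Ioo (0:ℝ) 1, deriv γt t = deriv γ t := fun t ht => (hev t ht).deriv_eq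
  have hℓeq : ∫ t in (0:ℝ)..1, ‖deriv γt t‖ = ℓ := by
    rw [hℓ, intervalIntegral.integral_of_le zero_le_one,
      intervalIntegral.integral_of_le zero_le_one,
      integral_Ioc_eq_integral_Ioo, integral_Ioc_eq_integral_Ioo]
    exact setIntegral_congr_fun measurableSet_Ioo fun t ht => by rw [hdeq t ht]
  have hγt0 : γt 0 = 0 := by
    rw [hagree 0 (left_mem_Icc.2 zero_le_one), hγ0]
  have hnormle : ∀ t ∈ Icc (0:ℝ) 1, ‖γ t‖ ≤ ℓ := by
    intro t ht
    have h1 : ‖γt t - γt 0‖ ≤ ∫ u in (0:ℝ)..t, ‖deriv γt u‖ := Stmt7Aux.lip_ftc hγtlip ht.1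
    rw [hγt0, sub_zero, hagree t ht] at h1
    refine h1.trans (le_of_le_of_eq ?_ hℓeq)
    exact intervalIntegral.integral_mono_interval le_rfl ht.1 ht.2
      (Filter.Eventually.of_forall fun u => norm_nonneg _)
      (Stmt7Aux.intInt_norm_deriv hγtlip 0 1)
  have hℓ0 : 0 ≤ ℓ := intervalIntegral.integral_nonneg zero_le_one fun u _ => norm_nonneg _
  have hℓr' : ℓ ≤ r := hℓr.le
  -- a.e. facts on (0,1]
  have hne : ∀ᵐ t ∂(volume.restrict (Ioc (0:ℝ) 1)), t ∈ Ioo (0:ℝ) 1 := by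
    rw [ae_iff]
    have hset : {t | ¬ t ∈ Ioo (0:ℝ) 1} = (Ioo (0:ℝ) 1)ᶜ := rfl
    rw [hset, Measure.restrict_apply (measurableSet_Ioo (a := (0:ℝ)) (b := 1)).compl]
    refine measure_mono_null ?_ (measure_singleton (1:ℝ))
    intro t ht
    simp only [mem_inter_iff, mem_compl_iff, mem_setOf_eq, mem_Ioo, mem_Ioc,
      mem_singleton_iff] at ht ⊢
    rcases lt_or_eq_of_le ht.2.2 with h|h
    · exact absurd ⟨ht.2.1, h⟩ ht.1
    · exact h
  have hdiffae : ∀ᵐ t ∂(volume.restrict (Ioc (0:ℝ) 1)), DifferentiableAt ℝ γt t :=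
    ae_restrict_of_ae hγtlip.ae_differentiableAt
  -- interval integrability of ‖deriv γ‖ on [0,1]
  have hbase : IntervalIntegrable (fun t => ‖deriv γ t‖) volume 0 1 := by
    rw [intervalIntegrable_iff_integrableOn_Ioc_of_le zero_le_one]
    refine ((intervalIntegrable_iff_integrableOn_Ioc_of_le zero_le_one).1
      (Stmt7Aux.intInt_norm_deriv hγtlip 0 1)).congr ?_
    filter_upwards [hne] with t ht
    rw [hdeq t ht]
  -- the dominating function for the inner integral
  set c : ℝ := (n:ℝ)^2 * K * ℓ^(m-1) with hc
  have hgbdInt : IntervalIntegrable (fun t => c * ‖deriv γ t‖) volume 0 1 :=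
    hbase.const_mul c
  have hgbdval : ∫ t in (0:ℝ)..1, c * ‖deriv γ t‖ = (n:ℝ)^2 * K * ℓ^m := by
    rw [intervalIntegral.integral_const_mul, ← hℓ, hc]
    have hpow : ℓ^(m-1) * ℓ = ℓ^m := by
      rw [← pow_succ]
      congr 1
      omega
    rw [mul_assoc ((n:ℝ)^2 * K), hpow]
  -- outer estimate
  have houter : ∀ s ∈ uIoc (0:ℝ) 1,
      ‖∫ t in (0:ℝ)..1, s • ∑ i, ∑ j, (γ t i * deriv (fun u => γ u j) t) • α i j (s • γ t)‖
        ≤ (n:ℝ)^2 * K * ℓ^m := by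
    intro s hs
    rw [uIoc_of_le zero_le_one] at hs
    have hs0 : 0 < s := hs.1
    have hs1 : s ≤ 1 := hs.2
    have hptbd : ∀ᵐ t ∂(volume.restrict (uIoc (0:ℝ) 1)),
        ‖s • ∑ i, ∑ j, (γ t i * deriv (fun u => γ u j) t) • α i j (s • γ t)‖
          ≤ c * ‖deriv γ t‖ := by
      rw [uIoc_of_le zero_le_one]
      filter_upwards [hne, hdiffae] with t ht hdiff
      have hγdiff : DifferentiableAt ℝ γ t := (hev t ht).differentiableAt_iff.1 hdiff
      have hderivcomp : ∀ j : Fin n, deriv (fun u => γ u j) t = deriv γ t j := by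
        intro j
        have h2 := ((EuclideanSpace.proj (𝕜 := ℝ) j).hasFDerivAt.comp_hasDerivAt t
          hγdiff.hasDerivAt)
        exact h2.deriv
      have hnt : ‖γ t‖ ≤ ℓ := hnormle t (Ioo_subset_Icc_self ht)
      have hsγ : ‖s • γ t‖ ≤ ℓ := by
        rw [norm_smul, Real.norm_eq_abs, abs_of_pos hs0]
        calc s * ‖γ t‖ ≤ 1 * ℓ := mul_le_mul hs1 hnt (norm_nonneg _) zero_le_one
          _ = ℓ := one_mul _
      have hαbd : ∀ i j : Fin n, ‖α i j (s • γ t)‖ ≤ K * ℓ^(m-2) := by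
        intro i j
        refine (hbound i j _ (hsγ.trans hℓr')).trans ?_
        exact mul_le_mul_of_nonneg_left (pow_le_pow_left₀ (norm_nonneg _) hsγ _) hK.le
      have hterm : ∀ i j : Fin n, ‖(γ t i * deriv (fun u => γ u j) t) • α i j (s • γ t)‖
          ≤ ℓ * ‖deriv γ t‖ * (K * ℓ^(m-2)) := by
        intro i j
        rw [norm_smul, Real.norm_eq_abs, abs_mul, hderivcomp j]
        have h1 : |γ t i| ≤ ℓ := (Stmt7Aux.abs_coord_le _ i).trans hnt
        have h2 : |deriv γ t j| ≤ ‖deriv γ t‖ := Stmt7Aux.abs_coord_le _ j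
        exact mul_le_mul (mul_le_mul h1 h2 (abs_nonneg _) hℓ0) (hαbd i j)
          (norm_nonneg _) (by positivity)
      calc ‖s • ∑ i, ∑ j, (γ t i * deriv (fun u => γ u j) t) • α i j (s • γ t)‖
          = |s| * ‖∑ i, ∑ j, (γ t i * deriv (fun u => γ u j) t) • α i j (s • γ t)‖ := by
            rw [norm_smul, Real.norm_eq_abs]
        _ ≤ 1 * ∑ i : Fin n, ∑ j : Fin n, ℓ * ‖deriv γ t‖ * (K * ℓ^(m-2)) := by
            refine mul_le_mul (abs_le.2 ⟨by linarith, hs1⟩)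
              (le_trans (norm_sum_le _ _) ?_) (norm_nonneg _) zero_le_one
            exact Finset.sum_le_sum fun i _ =>
              le_trans (norm_sum_le _ _) (Finset.sum_le_sum fun j _ => hterm i j)
        _ = c * ‖deriv γ t‖ := by
            simp only [Finset.sum_const, Finset.card_univ, Fintype.card_fin, nsmul_eq_mul]
            have hpow : ℓ^(m-1) = ℓ * ℓ^(m-2) := by
              rw [← pow_succ']
              congr 1
              omega
            rw [hc, hpow]
            ring
    have h1 := intervalIntegral.norm_integral_le_abs_of_norm_le hptbd hgbdInt
    refine h1.trans ?_
    rw [hgbdval, abs_of_nonneg (by positivity)]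
  have h2 := intervalIntegral.norm_integral_le_of_norm_le_const houter
  refine h2.trans (le_of_eq ?_)
  simp

end
end

section
/- Let ω_1,…,ω_n be a gauge of a connection over ℝⁿ that is radial centered at 0, i.e. Σ_{i=1}^n z_i ω_i(z) = 0 for all z ∈ ℝⁿ. Then the gauge is reconstructed from its curvature by the radial formula ω_j(z) = Σ_{i=1}^n z_i ∫₀¹ r Ω_{ij}(r z) dr, for every z ∈ ℝⁿ and every j = 1, …, n. -/
open MeasureTheory Set

noncomputable section

attribute [local instance] Matrix.frobeniusNormedAddCommGroup Matrix.frobeniusNormedRing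
  Matrix.frobeniusNormedSpace

section Aux

theorem aux_euc_sum_apply {n m : ℕ} (f : Fin m → Euc n) (k : Fin n) :
    (∑ i, f i) k = ∑ i, f i k := by
  induction m with
  | zero => simp
  | succ m ih =>
    rw [Fin.sum_univ_succ, Fin.sum_univ_succ (f := fun i => f i k), ← ih]
    rfl

theorem aux_sum_single {n : ℕ} (z : Euc n) :
    (∑ i, z i • EuclideanSpace.single i (1:ℝ)) = z := by
  ext k
  rw [aux_euc_sum_apply]
  simp [EuclideanSpace.single_apply, PiLp.smul_apply]

theorem aux_fderiv_dir {q n : ℕ} (f : Euc n → Mat q) (w z : Euc n) :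
    fderiv ℝ f w z = ∑ i, z i • fderiv ℝ f w (EuclideanSpace.single i 1) := by
  conv_lhs => rw [← aux_sum_single z]
  simp [map_sum]

theorem aux_radial_key {q n : ℕ} (ω : Fin n → Euc n → Mat q) (hω : ∀ i, ContDiff ℝ (⊤ : ℕ∞) (ω i))
    (hrad : ∀ z : Euc n, ∑ i, z i • ω i z = 0) (w : Euc n) (j : Fin n) :
    ω j w + ∑ i, w i • fderiv ℝ (ω i) w (EuclideanSpace.single j 1) = 0 := by
  have hD : HasFDerivAt (fun w : Euc n => ∑ i, w i • ω i w)
      (∑ i, ((w i) • fderiv ℝ (ω i) w +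
        (EuclideanSpace.proj i : Euc n →L[ℝ] ℝ).smulRight (ω i w))) w := by
    apply HasFDerivAt.fun_sum
    intro i _
    exact ((EuclideanSpace.proj i : Euc n →L[ℝ] ℝ).hasFDerivAt).smul
      (((hω i).differentiable (by simp) w).hasFDerivAt)
  have h0 : (fun w : Euc n => ∑ i, w i • ω i w) = fun _ => (0 : Mat q) := funext hrad
  rw [h0] at hD
  have huniq := hD.unique (hasFDerivAt_const 0 w)
  have h2 := congrArg (fun L => L (EuclideanSpace.single j (1:ℝ))) huniq
  simp only [ContinuousLinearMap.sum_apply, ContinuousLinearMap.add_apply,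
    ContinuousLinearMap.smul_apply, ContinuousLinearMap.smulRight_apply,
    ContinuousLinearMap.zero_apply] at h2
  have h3 : ∀ i : Fin n, (EuclideanSpace.proj i : Euc n →L[ℝ] ℝ)
      (EuclideanSpace.single j (1:ℝ)) = if i = j then 1 else 0 := by
    intro i; simp [EuclideanSpace.single_apply]
  rw [Finset.sum_add_distrib] at h2
  simp only [h3, ite_smul, one_smul, zero_smul, Finset.sum_ite_eq',
    Finset.mem_univ, if_true] at h2
  rw [add_comm]
  exact h2

theorem aux_curv_continuous {q n : ℕ} (ω : Fin n → Euc n → Mat q)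
    (hω : ∀ i, ContDiff ℝ (⊤ : ℕ∞) (ω i)) (i j : Fin n) : Continuous (curv ω i j) := by
  have hpd : ∀ (k l : Fin n), Continuous (pd (ω k) l) := fun k l =>
    ((hω k).continuous_fderiv (by simp)).clm_apply continuous_const
  exact (((hpd j i).sub (hpd i j)).add
    ((((hω i).continuous).mul ((hω j).continuous)).sub
      (((hω j).continuous).mul ((hω i).continuous))))

theorem aux_main_identity {q n : ℕ} (ω : Fin n → Euc n → Mat q)
    (hω : ∀ i, ContDiff ℝ (⊤ : ℕ∞) (ω i)) (hrad : ∀ z : Euc n, ∑ i, z i • ω i z = 0)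
    (z : Euc n) (j : Fin n) (r : ℝ) :
    r • fderiv ℝ (ω j) (r • z) z + (1:ℝ) • ω j (r • z) =
      r • ∑ i, z i • curv ω i j (r • z) := by
  set w := r • z with hwdef
  have hw : ∀ i, w i = r * z i := fun i => rfl
  have hsplit : ∑ i, z i • curv ω i j w =
      (∑ i, z i • pd (ω j) i w) - (∑ i, z i • pd (ω i) j w)
        + ∑ i, z i • (ω i w * ω j w - ω j w * ω i w) := by
    simp only [curv, smul_add, smul_sub, Finset.sum_add_distrib, Finset.sum_sub_distrib]
  rw [hsplit, smul_add, smul_sub]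
  have hA : r • ∑ i, z i • pd (ω j) i w = r • fderiv ℝ (ω j) w z := by
    rw [aux_fderiv_dir (ω j) w z]; rfl
  have hB : r • ∑ i, z i • pd (ω i) j w = - ω j w := by
    rw [Finset.smul_sum]
    have : ∀ i : Fin n, r • z i • pd (ω i) j w
        = w i • fderiv ℝ (ω i) w (EuclideanSpace.single j 1) := by
      intro i; rw [smul_smul, hw i]; rfl
    rw [Finset.sum_congr rfl fun i _ => this i]
    have := aux_radial_key ω hω hrad w j
    linear_combination (norm := module) this
  have hC : r • ∑ i, z i • (ω i w * ω j w - ω j w * ω i w) = 0 := by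
    rw [Finset.smul_sum]
    have : ∀ i : Fin n, r • z i • (ω i w * ω j w - ω j w * ω i w)
        = (w i • ω i w) * ω j w - ω j w * (w i • ω i w) := by
      intro i
      rw [smul_smul, ← hw i, smul_sub, smul_mul_assoc, mul_smul_comm]
    rw [Finset.sum_congr rfl fun i _ => this i, Finset.sum_sub_distrib,
      ← Finset.sum_mul, ← Finset.mul_sum, hrad w]
    simp
  rw [hA, hB, hC]
  module

theorem aux_reconstruction {q n : ℕ} (ω : Fin n → Euc n → Mat q)
    (hω : ∀ i, ContDiff ℝ (⊤ : ℕ∞) (ω i)) (hrad : ∀ z : Euc n, ∑ i, z i • ω i z = 0)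
    (z : Euc n) (j : Fin n) :
    ω j z = ∑ i, z i • ∫ r in (0:ℝ)..1, r • curv ω i j (r • z) := by
  have hcz : ∀ i : Fin n, Continuous fun r : ℝ => curv ω i j (r • z) :=
    fun i => (aux_curv_continuous ω hω i j).comp (continuous_id.smul continuous_const)
  have hderiv : ∀ r : ℝ, HasDerivAt (fun r : ℝ => r • ω j (r • z))
      (r • ∑ i, z i • curv ω i j (r • z)) r := by
    intro r
    have h1 : HasDerivAt (fun r : ℝ => r • z) z r := by
      simpa using (hasDerivAt_id r).smul_const z
    have h2 : HasDerivAt (fun r : ℝ => ω j (r • z)) (fderiv ℝ (ω j) (r • z) z) r :=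
      (((hω j).differentiable (by simp) (r • z)).hasFDerivAt).comp_hasDerivAt r h1
    have h4 := (hasDerivAt_id r).smul h2
    simp only [id_eq] at h4
    rw [aux_main_identity ω hω hrad z j r] at h4
    exact h4
  have hcont : Continuous fun r : ℝ => r • ∑ i, z i • curv ω i j (r • z) := by
    exact continuous_id.smul (continuous_finset_sum _ fun i _ =>
      (hcz i).const_smul (z i))
  have hFTC := intervalIntegral.integral_eq_sub_of_hasDerivAt
    (f := fun r : ℝ => r • ω j (r • z)) (fun t _ => hderiv t)
    (hcont.intervalIntegrable 0 1)
  have hval : ω j z = ∫ r in (0:ℝ)..1, r • ∑ i, z i • curv ω i j (r • z) := by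
    rw [hFTC]; simp
  rw [hval]
  have hswap : (∫ r in (0:ℝ)..1, r • ∑ i, z i • curv ω i j (r • z))
      = ∫ r in (0:ℝ)..1, ∑ i, z i • (r • curv ω i j (r • z)) := by
    refine intervalIntegral.integral_congr fun r _ => ?_
    rw [Finset.smul_sum]
    exact Finset.sum_congr rfl fun i _ => smul_comm r (z i) _
  rw [hswap, intervalIntegral.integral_finset_sum]
  · exact Finset.sum_congr rfl fun i _ => by
      rw [intervalIntegral.integral_smul]
  · intro i _
    exact ((continuous_id.smul (hcz i)).const_smul (z i)).intervalIntegrable 0 1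

end Aux

/-- A gauge radial centered at `0` is reconstructed from its curvature by
the radial formula `ω_j(z) = Σᵢ zᵢ ∫₀¹ r Ω_{ij}(rz) dr`. -/
theorem stmt9 (q n : ℕ) (hq : 1 ≤ q) (hn : 1 ≤ n)
    (ω : Fin n → Euc n → Mat q) (hω : ∀ i, ContDiff ℝ (⊤ : ℕ∞) (ω i))
    (hrad : ∀ z : Euc n, ∑ i, z i • ω i z = 0) :
    ∀ z : Euc n, ∀ j : Fin n,
      ω j z = ∑ i, z i • ∫ r in (0:ℝ)..1, r • curv ω i j (r • z) := by
  intro z j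
  exact aux_reconstruction ω hω hrad z j

end
end

section
/- There exist constants ε₀ ∈ (0, 1) and C ≥ 0, depending only on q and the chosen norm, with the following property: for every continuous A : [0, 1] → M_q(ℂ) with sup_{t ∈ [0,1]} ‖A(t)‖ < ε₀, the solution a : [0,1] → M_q(ℂ) of a'(t) = A(t) a(t), a(0) = I, admits a matrix Q ∈ M_q(ℂ) with exp(Q) = a(1) and ‖Q − ∫₀¹ A(t) dt‖ ≤ C · (sup_{t ∈ [0,1]} ‖A(t)‖)². -/
/-!
By Grönwall, `‖a t - 1‖ = O(ε)` on `[0, 1]`, where `ε = sup ‖A‖`; hence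
`a 1 - 1 = ∫ A a = ∫ A + ∫ A (a - 1) = ∫ A + O(ε²)`. By the inverse function theorem `exp` has a
local inverse near `1`, and since `exp Q = 1 + Q + O(‖Q‖²)`, this logarithm of `a 1` differs from
`a 1 - 1` by `O(ε²)`.
-/

open MeasureTheory Set

noncomputable section

attribute [local instance] Matrix.frobeniusNormedAddCommGroup Matrix.frobeniusNormedRing
  Matrix.frobeniusNormedSpace

attribute [local instance] Matrix.frobeniusNormedAlgebra

namespace NormedSpace

open scoped Nat Topology

variable {𝔸 : Type*} [NormedRing 𝔸] [CompleteSpace 𝔸]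

theorem norm_exp_sub_one_sub_self_le (𝕂 : Type*) [RCLike 𝕂] [NormedAlgebra 𝕂 𝔸] {x : 𝔸}
    (hx : ‖x‖ ≤ 1) :
    ‖exp x - 1 - x‖ ≤ ‖x‖ ^ 2 := by
  have htail : HasSum (fun n => ((n + 2)!⁻¹ : 𝕂) • x ^ (n + 2)) (exp x - 1 - x) := by
    have := (hasSum_nat_add_iff' 2).mpr (exp_series_hasSum_exp' (𝕂 := 𝕂) x)
    simpa [Finset.sum_range_succ, sub_sub] using this
  have hreal : HasSum (fun n => ‖x‖ ^ (n + 2) / (n + 2)!) (Real.exp ‖x‖ - 1 - ‖x‖) := by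
    have := (hasSum_nat_add_iff' 2).mpr (Real.exp_eq_exp_ℝ ▸ expSeries_div_hasSum_exp ‖x‖)
    simpa [Finset.sum_range_succ, sub_sub] using this
  calc ‖exp x - 1 - x‖ ≤ Real.exp ‖x‖ - 1 - ‖x‖ := htail.norm_le_of_bounded hreal fun n => ?_
    _ ≤ ‖x‖ ^ 2 := (abs_le.mp (Real.abs_exp_sub_one_sub_id_le (by rwa [abs_norm]))).2
  rw [norm_smul, norm_inv, RCLike.norm_natCast, inv_mul_eq_div]
  exact div_le_div_of_nonneg_right (norm_pow_le' x (by omega)) (by positivity)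

theorem norm_sub_sub_one_le_of_exp_eq (𝕂 : Type*) [RCLike 𝕂] [NormedAlgebra 𝕂 𝔸] {Q y : 𝔸}
    (hQy : exp Q = y) (hQ : ‖Q‖ ≤ 1 / 2) :
    ‖Q - (y - 1)‖ ≤ 4 * ‖y - 1‖ ^ 2 := by
  have htail : ‖Q - (y - 1)‖ ≤ ‖Q‖ ^ 2 := by
    rw [norm_sub_rev, ← hQy]
    exact norm_exp_sub_one_sub_self_le 𝕂 (hQ.trans (by norm_num))
  have hQ_le : ‖Q‖ ≤ 2 * ‖y - 1‖ := by
    have : ‖Q‖ ≤ ‖Q - (y - 1)‖ + ‖y - 1‖ := norm_le_norm_sub_add Q (y - 1)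
    nlinarith [norm_nonneg Q]
  calc ‖Q - (y - 1)‖ ≤ ‖Q‖ ^ 2 := htail
    _ ≤ (2 * ‖y - 1‖) ^ 2 := by gcongr
    _ = 4 * ‖y - 1‖ ^ 2 := by ring

theorem exists_exp_eq_of_norm_sub_one_lt (𝕂 : Type*) [RCLike 𝕂] [NormedAlgebra 𝕂 𝔸] {r : ℝ}
    (hr : 0 < r) :
    ∃ δ > 0, ∀ y : 𝔸, ‖y - 1‖ < δ → ∃ Q, exp Q = y ∧ ‖Q‖ < r := by
  have hmap : Filter.map exp (𝓝 (0 : 𝔸)) = 𝓝 1 := by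
    simpa using (hasStrictFDerivAt_exp_zero (𝕂 := 𝕂) (𝔸 := 𝔸)).map_nhds_eq_of_equiv
      (f' := ContinuousLinearEquiv.refl 𝕂 𝔸)
  have himage : exp '' Metric.ball (0 : 𝔸) r ∈ 𝓝 1 :=
    hmap ▸ Filter.image_mem_map (Metric.ball_mem_nhds 0 hr)
  obtain ⟨δ, hδ, hball⟩ := Metric.mem_nhds_iff.mp himage
  refine ⟨δ, hδ, fun y hy => ?_⟩
  obtain ⟨Q, hQ, rfl⟩ := hball (mem_ball_iff_norm.mpr hy)
  exact ⟨Q, rfl, mem_ball_zero_iff.mp hQ⟩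

theorem exists_exp_eq_and_norm_sub_sub_one_le (𝕂 : Type*) [RCLike 𝕂] [NormedAlgebra 𝕂 𝔸] :
    ∃ δ > 0, ∀ y : 𝔸, ‖y - 1‖ < δ → ∃ Q, exp Q = y ∧ ‖Q - (y - 1)‖ ≤ 4 * ‖y - 1‖ ^ 2 := by
  obtain ⟨δ, hδ, hlog⟩ := exists_exp_eq_of_norm_sub_one_lt 𝕂 (𝔸 := 𝔸) one_half_pos
  refine ⟨δ, hδ, fun y hy => ?_⟩
  obtain ⟨Q, hQy, hQ⟩ := hlog y hy
  exact ⟨Q, hQy, norm_sub_sub_one_le_of_exp_eq 𝕂 hQy hQ.le⟩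

end NormedSpace

section LinearODE

variable {𝔸 : Type*} [NormedRing 𝔸] [NormedSpace ℝ 𝔸] {A a : ℝ → 𝔸} {ε : ℝ}

theorem norm_sub_one_le_of_hasDerivWithinAt_mul (hA : ∀ t ∈ Icc (0 : ℝ) 1, ‖A t‖ ≤ ε)
    (hε : ε ≤ 1) (ha0 : a 0 = 1)
    (ha : ∀ t ∈ Icc (0 : ℝ) 1, HasDerivWithinAt a (A t * a t) (Icc 0 1) t) :
    ∀ t ∈ Icc (0 : ℝ) 1, ‖a t - 1‖ ≤ 2 * ‖(1 : 𝔸)‖ * ε := by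
  have hε0 : 0 ≤ ε := (norm_nonneg _).trans (hA 0 (left_mem_Icc.mpr zero_le_one))
  have hderiv : ∀ x ∈ Ico (0 : ℝ) 1, HasDerivWithinAt (a · - 1) (A x * a x) (Ici x) x :=
    fun x hx => ((ha x (Ico_subset_Icc_self hx)).mono_of_mem_nhdsWithin
      (Icc_mem_nhdsGE_of_mem hx)).sub_const 1
  have hbound : ∀ x ∈ Ico (0 : ℝ) 1, ‖A x * a x‖ ≤ 1 * ‖a x - 1‖ + ε * ‖(1 : 𝔸)‖ := by
    intro x hx
    have hAx := hA x (Ico_subset_Icc_self hx)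
    calc ‖A x * a x‖ = ‖A x * (a x - 1) + A x * 1‖ := by rw [mul_sub, sub_add_cancel]
      _ ≤ ‖A x‖ * ‖a x - 1‖ + ‖A x‖ * ‖(1 : 𝔸)‖ :=
        norm_add_le_of_le (norm_mul_le _ _) (norm_mul_le _ _)
      _ ≤ 1 * ‖a x - 1‖ + ε * ‖(1 : 𝔸)‖ := by gcongr; linarith
  -- Grönwall with rate `1 ≥ ε` gives `‖a t - 1‖ ≤ ε ‖1‖ (e^t - 1) ≤ 2 ‖1‖ ε`.
  intro t ht
  have hgronwall := norm_le_gronwallBound_of_norm_deriv_right_le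
    (fun s hs => ((ha s hs).continuousWithinAt.sub continuousWithinAt_const))
    hderiv (by simp [ha0] : ‖a 0 - 1‖ ≤ 0) hbound t ht
  rw [gronwallBound_of_K_ne_0 one_ne_zero] at hgronwall
  have hexp : Real.exp (1 * (t - 0)) ≤ 3 := by
    calc Real.exp (1 * (t - 0)) ≤ Real.exp 1 := Real.exp_le_exp.mpr (by linarith [ht.2])
      _ ≤ 3 := by linarith [Real.exp_one_lt_d9]
  calc ‖a t - 1‖
      ≤ 0 * Real.exp (1 * (t - 0)) + ε * ‖(1 : 𝔸)‖ / 1 * (Real.exp (1 * (t - 0)) - 1) :=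
        hgronwall
    _ ≤ 2 * ‖(1 : 𝔸)‖ * ε := by
        nlinarith [norm_nonneg (1 : 𝔸), mul_nonneg hε0 (norm_nonneg (1 : 𝔸))]

variable [CompleteSpace 𝔸]

theorem norm_sub_one_sub_integral_le (hAc : ContinuousOn A (Icc 0 1))
    (hA : ∀ t ∈ Icc (0 : ℝ) 1, ‖A t‖ ≤ ε) (hε : ε ≤ 1) (ha0 : a 0 = 1)
    (ha : ∀ t ∈ Icc (0 : ℝ) 1, HasDerivWithinAt a (A t * a t) (Icc 0 1) t) :
    ‖a 1 - 1 - ∫ t in (0 : ℝ)..1, A t‖ ≤ 2 * ‖(1 : 𝔸)‖ * ε ^ 2 := by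
  have hac : ContinuousOn a (Icc 0 1) := fun t ht => (ha t ht).continuousWithinAt
  have hAa : IntervalIntegrable (fun t => A t * a t) volume 0 1 :=
    (hAc.mul hac).intervalIntegrable_of_Icc zero_le_one
  have hFTC : ∫ t in (0 : ℝ)..1, A t * a t = a 1 - a 0 :=
    intervalIntegral.integral_eq_sub_of_hasDeriv_right_of_le zero_le_one hac
      (fun x hx => (ha x (Ioo_subset_Icc_self hx)).mono_of_mem_nhdsWithin
        (Icc_mem_nhdsGT_of_mem (Ioo_subset_Ico_self hx))) hAa
  have heq : a 1 - 1 - ∫ t in (0 : ℝ)..1, A t = ∫ t in (0 : ℝ)..1, A t * (a t - 1) := by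
    simp only [mul_sub, mul_one]
    rw [intervalIntegral.integral_sub hAa (hAc.intervalIntegrable_of_Icc zero_le_one), hFTC, ha0]
  have hbound : ∀ t ∈ uIoc (0 : ℝ) 1, ‖A t * (a t - 1)‖ ≤ ε * (2 * ‖(1 : 𝔸)‖ * ε) := by
    intro t ht
    rw [uIoc_of_le zero_le_one] at ht
    have ht' : t ∈ Icc (0 : ℝ) 1 := Ioc_subset_Icc_self ht
    have hε0 : 0 ≤ ε := (norm_nonneg _).trans (hA t ht')
    exact (norm_mul_le _ _).trans (mul_le_mul (hA t ht')
      (norm_sub_one_le_of_hasDerivWithinAt_mul hA hε ha0 ha t ht') (norm_nonneg _) hε0)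
  calc ‖a 1 - 1 - ∫ t in (0 : ℝ)..1, A t‖ ≤ ε * (2 * ‖(1 : 𝔸)‖ * ε) * |1 - 0| := by
        rw [heq]; exact intervalIntegral.norm_integral_le_of_norm_le_const hbound
    _ = 2 * ‖(1 : 𝔸)‖ * ε ^ 2 := by rw [sub_zero, abs_one, mul_one]; ring

end LinearODE

theorem stmt12_general (q : ℕ) :
    ∃ ε₀ : ℝ, 0 < ε₀ ∧ ε₀ < 1 ∧ ∃ C ≥ (0:ℝ),
      ∀ A : ℝ → Mat q, ContinuousOn A (Icc 0 1) →
        sSup ((fun t => ‖A t‖) '' Icc 0 1) < ε₀ →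
        ∀ a : ℝ → Mat q, a 0 = 1 →
          (∀ t ∈ Icc (0:ℝ) 1, HasDerivWithinAt a (A t * a t) (Icc 0 1) t) →
          ∃ Q : Mat q, NormedSpace.exp Q = a 1 ∧
            ‖Q - ∫ t in (0:ℝ)..1, A t‖ ≤
              C * (sSup ((fun t => ‖A t‖) '' Icc 0 1)) ^ 2 := by
  obtain ⟨δ, hδ, hlog⟩ := NormedSpace.exists_exp_eq_and_norm_sub_sub_one_le ℂ (𝔸 := Mat q)
  set B := ‖(1 : Mat q)‖
  refine ⟨min (1 / 2) (δ / (2 * B + 1)), by positivity, (min_le_left _ _).trans_lt (by norm_num),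
    16 * B ^ 2 + 2 * B, by positivity, fun A hAc hsup a ha0 ha => ?_⟩
  set ε := sSup ((fun t => ‖A t‖) '' Icc 0 1)
  have hAε : ∀ t ∈ Icc (0 : ℝ) 1, ‖A t‖ ≤ ε := fun t ht =>
    le_csSup (isCompact_Icc.image_of_continuousOn hAc.norm).bddAbove (mem_image_of_mem _ ht)
  have hε0 : 0 ≤ ε := (norm_nonneg _).trans (hAε 0 (left_mem_Icc.mpr zero_le_one))
  have hε1 : ε ≤ 1 := by linarith [hsup.trans_le (min_le_left _ _)]
  have ha1 : ‖a 1 - 1‖ ≤ 2 * B * ε :=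
    norm_sub_one_le_of_hasDerivWithinAt_mul hAε hε1 ha0 ha 1 (right_mem_Icc.mpr zero_le_one)
  have ha1δ : ‖a 1 - 1‖ < δ := by
    have := (lt_div_iff₀ (by positivity)).mp (hsup.trans_le (min_le_right _ _))
    nlinarith
  obtain ⟨Q, hQ, hQa⟩ := hlog (a 1) ha1δ
  refine ⟨Q, hQ, ?_⟩
  calc ‖Q - ∫ t in (0:ℝ)..1, A t‖
      ≤ ‖Q - (a 1 - 1)‖ + ‖a 1 - 1 - ∫ t in (0:ℝ)..1, A t‖ :=
        norm_sub_le_norm_sub_add_norm_sub _ _ _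
    _ ≤ 4 * (2 * B * ε) ^ 2 + 2 * B * ε ^ 2 := by
        gcongr
        · exact hQa.trans (by gcongr)
        · exact norm_sub_one_sub_integral_le hAc hAε hε1 ha0 ha
    _ = (16 * B ^ 2 + 2 * B) * ε ^ 2 := by ring

/-- There are constants `ε₀ ∈ (0,1)` and `C ≥ 0` (depending only on `q`
and the norm) such that for every continuous `A : [0,1] → M_q(ℂ)` with
`sup_{[0,1]} ‖A‖ < ε₀`, the solution of `a' = A a`, `a(0) = I`, admits a logarithm
`Q` (`exp Q = a(1)`) with `‖Q - ∫₀¹ A‖ ≤ C (sup ‖A‖)²`. -/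
theorem stmt12 (q : ℕ) (hq : 1 ≤ q) :
    ∃ ε₀ : ℝ, 0 < ε₀ ∧ ε₀ < 1 ∧ ∃ C ≥ (0:ℝ),
      ∀ A : ℝ → Mat q, ContinuousOn A (Icc 0 1) →
        sSup ((fun t => ‖A t‖) '' Icc 0 1) < ε₀ →
        ∀ a : ℝ → Mat q, a 0 = 1 →
          (∀ t ∈ Icc (0:ℝ) 1, HasDerivWithinAt a (A t * a t) (Icc 0 1) t) →
          ∃ Q : Mat q, NormedSpace.exp Q = a 1 ∧
            ‖Q - ∫ t in (0:ℝ)..1, A t‖ ≤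
              C * (sSup ((fun t => ‖A t‖) '' Icc 0 1)) ^ 2 :=
  stmt12_general q
end
end

section
/- Let t > 0, let A : [0, t] → M_q(ℂ) be continuous with M = sup_{s ∈ [0,t]} ‖A(s)‖, and let Q, Q₁, Q₂ : [0, t] → M_q(ℂ) be continuous curves with ‖ad‖ · ‖Q(s)‖ ≤ π, ‖ad‖ · ‖Q₁(s)‖ ≤ π, and ‖ad‖ · ‖Q₂(s)‖ ≤ π for all s. Define 𝒜(Q)(τ) = ∫₀^τ g(ad Q(s)) A(s) ds for τ ∈ [0, t]. Then sup_{τ ∈ [0,t]} ‖𝒜(Q)(τ)‖ ≤ t M B₁, and sup_{τ ∈ [0,t]} ‖𝒜(Q₁)(τ) − 𝒜(Q₂)(τ)‖ ≤ t M B₂ ‖ad‖ · sup_{s ∈ [0,t]} ‖Q₁(s) − Q₂(s)‖. -/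
/-
Since `‖ad Q‖ ≤ ‖ad‖ ‖Q‖ ≤ π`, the series `g(ad Q) = ∑ cₖ (ad Q)ᵏ` is dominated termwise by
`∑ |cₖ| πᵏ = B₁`. Writing `(ad Q₁)^(k+1) - (ad Q₂)^(k+1)` as
`ad Q₁ ((ad Q₁)ᵏ - (ad Q₂)ᵏ) + ad (Q₁ - Q₂) (ad Q₂)ᵏ` gives by induction the bound
`(k+1) πᵏ ‖ad‖ ‖Q₁ - Q₂‖`, so `g(ad Q₁) - g(ad Q₂)` is dominated by `B₂ ‖ad‖ ‖Q₁ - Q₂‖`.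
Integrating these pointwise bounds over `[0, τ] ⊆ [0, t]` gives both estimates; the same bounds
make `(Q, X) ↦ g(ad Q) X` continuous, so the integrands are integrable.
-/

open MeasureTheory Set

noncomputable section

attribute [local instance] Matrix.frobeniusNormedAddCommGroup Matrix.frobeniusNormedRing
  Matrix.frobeniusNormedSpace

/-- The adjoint operator `ad Q = [Q, ·]`. -/
def adOp {q : ℕ} (Q X : Mat q) : Mat q := Q * X - X * Q

/-- The operator `g(ad Q)` given by the convergent power series `Σₖ cₖ (ad Q)ᵏ`. -/
def gAd {q : ℕ} (c : ℕ → ℂ) (Q A : Mat q) : Mat q := ∑' k : ℕ, c k • (adOp Q)^[k] A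

/-- `‖ad‖ = sup { ‖[X,Y]‖ : ‖X‖ = ‖Y‖ = 1 }`. -/
def adNorm (q : ℕ) : ℝ :=
  sSup {t : ℝ | ∃ X Y : Mat q, ‖X‖ = 1 ∧ ‖Y‖ = 1 ∧ t = ‖X * Y - Y * X‖}

section IterateSeries

variable {𝕜 E : Type*} [NormedField 𝕜] [NormedAddCommGroup E]

theorem norm_iterate_le {f : E → E} {r : ℝ} (hr : 0 ≤ r) (hf : ∀ x, ‖f x‖ ≤ r * ‖x‖)
    (k : ℕ) (x : E) : ‖f^[k] x‖ ≤ r ^ k * ‖x‖ := by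
  induction k with
  | zero => simp
  | succ k ih =>
    rw [Function.iterate_succ_apply', pow_succ', mul_assoc]
    exact (hf _).trans (mul_le_mul_of_nonneg_left ih hr)

theorem norm_iterate_sub_iterate_le (f : E →+ E) {g : E → E} {r δ : ℝ} (hr : 0 ≤ r) (hδ : 0 ≤ δ)
    (hf : ∀ x, ‖f x‖ ≤ r * ‖x‖) (hg : ∀ x, ‖g x‖ ≤ r * ‖x‖)
    (hfg : ∀ x, ‖f x - g x‖ ≤ δ * ‖x‖) (k : ℕ) (x : E) :
    ‖f^[k + 1] x - g^[k + 1] x‖ ≤ (k + 1) * r ^ k * δ * ‖x‖ := by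
  induction k with
  | zero => simpa using hfg x
  | succ k ih =>
    have hsplit : f^[k + 2] x - g^[k + 2] x =
        f (f^[k + 1] x - g^[k + 1] x) + (f (g^[k + 1] x) - g (g^[k + 1] x)) := by
      rw [Function.iterate_succ_apply' f, Function.iterate_succ_apply' g, map_sub]; abel
    calc ‖f^[k + 2] x - g^[k + 2] x‖
        ≤ r * ((k + 1) * r ^ k * δ * ‖x‖) + δ * (r ^ (k + 1) * ‖x‖) := by
          rw [hsplit]
          exact (norm_add_le _ _).trans <| add_le_add
            ((hf _).trans (mul_le_mul_of_nonneg_left ih hr))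
            ((hfg _).trans (mul_le_mul_of_nonneg_left (norm_iterate_le hr hg _ _) hδ))
      _ = (↑(k + 1) + 1) * r ^ (k + 1) * δ * ‖x‖ := by push_cast; ring

variable [NormedSpace 𝕜 E]

noncomputable def iterateSeries (c : ℕ → 𝕜) (f : E → E) (x : E) : E := ∑' k, c k • f^[k] x

variable {c : ℕ → 𝕜} {f : E → E} {r : ℝ}

theorem norm_smul_iterate_le (hr : 0 ≤ r) (hf : ∀ x, ‖f x‖ ≤ r * ‖x‖) (k : ℕ) (x : E) :
    ‖c k • f^[k] x‖ ≤ ‖c k‖ * r ^ k * ‖x‖ := by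
  rw [norm_smul, mul_assoc]
  exact mul_le_mul_of_nonneg_left (norm_iterate_le hr hf k x) (norm_nonneg _)

theorem norm_iterateSeries_le (hr : 0 ≤ r) (hf : ∀ x, ‖f x‖ ≤ r * ‖x‖)
    (hc : Summable fun k => ‖c k‖ * r ^ k) (x : E) :
    ‖iterateSeries c f x‖ ≤ (∑' k, ‖c k‖ * r ^ k) * ‖x‖ :=
  tsum_of_norm_bounded (hc.hasSum.mul_right ‖x‖) (norm_smul_iterate_le hr hf · x)

variable [CompleteSpace E]

theorem summable_smul_iterate (hr : 0 ≤ r) (hf : ∀ x, ‖f x‖ ≤ r * ‖x‖)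
    (hc : Summable fun k => ‖c k‖ * r ^ k) (x : E) : Summable fun k => c k • f^[k] x :=
  (hc.mul_right ‖x‖).of_norm_bounded (norm_smul_iterate_le hr hf · x)

theorem iterateSeries_sub (f : E →+ E) (hr : 0 ≤ r) (hf : ∀ x, ‖f x‖ ≤ r * ‖x‖)
    (hc : Summable fun k => ‖c k‖ * r ^ k) (x y : E) :
    iterateSeries c f (x - y) = iterateSeries c f x - iterateSeries c f y := by
  rw [iterateSeries, iterateSeries, iterateSeries,
    ← (summable_smul_iterate hr hf hc x).tsum_sub (summable_smul_iterate hr hf hc y)]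
  simp only [iterate_map_sub, smul_sub]

theorem norm_iterateSeries_sub_iterateSeries_le (f : E →+ E) {g : E → E} {δ : ℝ}
    (hr : 0 ≤ r) (hδ : 0 ≤ δ) (hf : ∀ x, ‖f x‖ ≤ r * ‖x‖) (hg : ∀ x, ‖g x‖ ≤ r * ‖x‖)
    (hfg : ∀ x, ‖f x - g x‖ ≤ δ * ‖x‖) (hc : Summable fun k => ‖c k‖ * r ^ k)
    (hc' : Summable fun k : ℕ => ((k : ℝ) + 1) * ‖c (k + 1)‖ * r ^ k) (x : E) :
    ‖iterateSeries c f x - iterateSeries c g x‖ ≤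
      (∑' k : ℕ, ((k : ℝ) + 1) * ‖c (k + 1)‖ * r ^ k) * δ * ‖x‖ := by
  have hsum := (summable_smul_iterate hr hf hc x).sub (summable_smul_iterate hr hg hc x)
  rw [iterateSeries, iterateSeries, ← (summable_smul_iterate hr hf hc x).tsum_sub
    (summable_smul_iterate hr hg hc x), hsum.tsum_eq_zero_add]
  simp only [Function.iterate_zero_apply, sub_self, zero_add]
  refine tsum_of_norm_bounded ((hc'.hasSum.mul_right δ).mul_right ‖x‖) fun k => ?_
  calc ‖c (k + 1) • f^[k + 1] x - c (k + 1) • g^[k + 1] x‖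
      = ‖c (k + 1)‖ * ‖f^[k + 1] x - g^[k + 1] x‖ := by rw [← smul_sub, norm_smul]
    _ ≤ ‖c (k + 1)‖ * ((k + 1) * r ^ k * δ * ‖x‖) := mul_le_mul_of_nonneg_left
        (norm_iterate_sub_iterate_le f hr hδ hf hg hfg k x) (norm_nonneg _)
    _ = ((k : ℝ) + 1) * ‖c (k + 1)‖ * r ^ k * δ * ‖x‖ := by ring

end IterateSeries

section Commutator

variable {q : ℕ}

theorem adNorm_nonneg (q : ℕ) : 0 ≤ adNorm q :=
  Real.sSup_nonneg <| by rintro _ ⟨X, Y, -, -, rfl⟩; exact norm_nonneg _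

theorem norm_commutator_le_adNorm {X Y : Mat q} (hX : ‖X‖ = 1) (hY : ‖Y‖ = 1) :
    ‖X * Y - Y * X‖ ≤ adNorm q := by
  refine le_csSup ⟨2, ?_⟩ ⟨X, Y, hX, hY, rfl⟩
  rintro _ ⟨X, Y, hX, hY, rfl⟩
  calc ‖X * Y - Y * X‖ ≤ ‖X‖ * ‖Y‖ + ‖Y‖ * ‖X‖ :=
        (norm_sub_le _ _).trans (add_le_add (norm_mul_le _ _) (norm_mul_le _ _))
    _ = 2 := by rw [hX, hY]; norm_num

theorem adOp_smul_smul (a b : ℝ) (Q X : Mat q) : adOp (a • Q) (b • X) = (a * b) • adOp Q X := by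
  simp only [adOp, smul_mul_smul_comm, mul_comm b a, smul_sub]

theorem norm_adOp_le (Q X : Mat q) : ‖adOp Q X‖ ≤ adNorm q * ‖Q‖ * ‖X‖ := by
  rcases eq_or_ne Q 0 with rfl | hQ
  · simp [adOp]
  rcases eq_or_ne X 0 with rfl | hX
  · simp [adOp]
  have hunit := norm_commutator_le_adNorm (norm_smul_inv_norm (𝕜 := ℝ) hQ)
    (norm_smul_inv_norm (𝕜 := ℝ) hX)
  rw [← adOp, adOp_smul_smul, norm_smul] at hunit
  have hpos : 0 < ‖Q‖ * ‖X‖ := by positivity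
  simp only [RCLike.ofReal_real_eq_id, id_eq, norm_mul, norm_inv, norm_norm] at hunit
  calc ‖adOp Q X‖ = (‖Q‖ * ‖X‖) * ((‖Q‖⁻¹ * ‖X‖⁻¹) * ‖adOp Q X‖) := by field_simp
    _ ≤ (‖Q‖ * ‖X‖) * adNorm q := mul_le_mul_of_nonneg_left hunit hpos.le
    _ = adNorm q * ‖Q‖ * ‖X‖ := by ring

def adOpHom (Q : Mat q) : Mat q →+ Mat q :=
  AddMonoidHom.mk' (adOp Q) fun X Y => by simp only [adOp, mul_add, add_mul]; abel

theorem norm_adOp_le_pi {Q : Mat q} (hQ : adNorm q * ‖Q‖ ≤ Real.pi) (X : Mat q) :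
    ‖adOp Q X‖ ≤ Real.pi * ‖X‖ :=
  (norm_adOp_le Q X).trans (mul_le_mul_of_nonneg_right hQ (norm_nonneg X))

theorem norm_adOp_sub_adOp_le (Q₁ Q₂ X : Mat q) :
    ‖adOp Q₁ X - adOp Q₂ X‖ ≤ adNorm q * ‖Q₁ - Q₂‖ * ‖X‖ := by
  have : adOp Q₁ X - adOp Q₂ X = adOp (Q₁ - Q₂) X := by simp only [adOp, sub_mul, mul_sub]; abel
  exact this ▸ norm_adOp_le _ _

end Commutator

section GAd

variable {q : ℕ} {c : ℕ → ℂ}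

theorem norm_gAd_le (hc : Summable fun k => ‖c k‖ * Real.pi ^ k) {Q : Mat q}
    (hQ : adNorm q * ‖Q‖ ≤ Real.pi) (X : Mat q) :
    ‖gAd c Q X‖ ≤ (∑' k, ‖c k‖ * Real.pi ^ k) * ‖X‖ :=
  norm_iterateSeries_le Real.pi_pos.le (norm_adOp_le_pi hQ) hc X

theorem gAd_sub (hc : Summable fun k => ‖c k‖ * Real.pi ^ k) {Q : Mat q}
    (hQ : adNorm q * ‖Q‖ ≤ Real.pi) (X Y : Mat q) :
    gAd c Q (X - Y) = gAd c Q X - gAd c Q Y :=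
  iterateSeries_sub (adOpHom Q) Real.pi_pos.le (norm_adOp_le_pi hQ) hc X Y

theorem norm_gAd_sub_gAd_le (hc : Summable fun k => ‖c k‖ * Real.pi ^ k)
    (hc' : Summable fun k : ℕ => ((k : ℝ) + 1) * ‖c (k + 1)‖ * Real.pi ^ k) {Q₁ Q₂ : Mat q}
    (hQ₁ : adNorm q * ‖Q₁‖ ≤ Real.pi) (hQ₂ : adNorm q * ‖Q₂‖ ≤ Real.pi) (X : Mat q) :
    ‖gAd c Q₁ X - gAd c Q₂ X‖ ≤
      (∑' k : ℕ, ((k : ℝ) + 1) * ‖c (k + 1)‖ * Real.pi ^ k) * (adNorm q * ‖Q₁ - Q₂‖) * ‖X‖ :=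
  norm_iterateSeries_sub_iterateSeries_le (adOpHom Q₁) Real.pi_pos.le
    (by have := adNorm_nonneg q; positivity) (norm_adOp_le_pi hQ₁) (norm_adOp_le_pi hQ₂)
    (norm_adOp_sub_adOp_le Q₁ Q₂) hc hc' X

end GAd

open Filter Topology in
theorem continuousOn_gAd_uncurry {q : ℕ} {c : ℕ → ℂ} (hc : Summable fun k => ‖c k‖ * Real.pi ^ k)
    (hc' : Summable fun k : ℕ => ((k : ℝ) + 1) * ‖c (k + 1)‖ * Real.pi ^ k) :
    ContinuousOn (fun p : Mat q × Mat q => gAd c p.1 p.2) {p | adNorm q * ‖p.1‖ ≤ Real.pi} := by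
  rintro ⟨Q₀, X₀⟩ (h₀ : adNorm q * ‖Q₀‖ ≤ Real.pi)
  set B₁ := ∑' k, ‖c k‖ * Real.pi ^ k
  set B₂ := ∑' k : ℕ, ((k : ℝ) + 1) * ‖c (k + 1)‖ * Real.pi ^ k
  let bound : Mat q × Mat q → ℝ := fun p => B₁ * ‖p.2 - X₀‖ + B₂ * (adNorm q * ‖p.1 - Q₀‖) * ‖X₀‖
  have hle : ∀ p ∈ {p : Mat q × Mat q | adNorm q * ‖p.1‖ ≤ Real.pi},
      ‖gAd c p.1 p.2 - gAd c Q₀ X₀‖ ≤ bound p := by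
    rintro ⟨Q, X⟩ (hQ : adNorm q * ‖Q‖ ≤ Real.pi)
    have hsplit : gAd c Q X - gAd c Q₀ X₀ = gAd c Q (X - X₀) + (gAd c Q X₀ - gAd c Q₀ X₀) := by
      rw [gAd_sub hc hQ]; abel
    rw [hsplit]
    exact (norm_add_le _ _).trans
      (add_le_add (norm_gAd_le hc hQ _) (norm_gAd_sub_gAd_le hc hc' hQ h₀ _))
  have hbound : Tendsto bound (𝓝 (Q₀, X₀)) (𝓝 0) := by
    have : Continuous bound := by fun_prop
    simpa [bound] using this.tendsto (Q₀, X₀)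
  exact tendsto_iff_norm_sub_tendsto_zero.2 <| squeeze_zero' (.of_forall fun _ => norm_nonneg _)
    (eventually_nhdsWithin_of_forall hle) (hbound.mono_left nhdsWithin_le_nhds)

theorem ContinuousOn.gAd {α : Type*} [TopologicalSpace α] {q : ℕ} {c : ℕ → ℂ}
    {Q A : α → Mat q} {s : Set α} (hQ : ContinuousOn Q s) (hA : ContinuousOn A s)
    (hc : Summable fun k => ‖c k‖ * Real.pi ^ k)
    (hc' : Summable fun k : ℕ => ((k : ℝ) + 1) * ‖c (k + 1)‖ * Real.pi ^ k)
    (hQπ : ∀ x ∈ s, adNorm q * ‖Q x‖ ≤ Real.pi) :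
    ContinuousOn (fun x => _root_.gAd c (Q x) (A x)) s := by
  have hmaps : MapsTo (fun x => (Q x, A x)) s {p | adNorm q * ‖p.1‖ ≤ Real.pi} := hQπ
  exact ((continuousOn_gAd_uncurry hc hc').comp (hQ.prodMk hA) hmaps :)

theorem norm_intervalIntegral_le_of_norm_le_on_Icc {E : Type*} [NormedAddCommGroup E]
    [NormedSpace ℝ E] {f : ℝ → E} {t C τ : ℝ} (hτ : τ ∈ Icc 0 t)
    (hf : ∀ s ∈ Icc 0 t, ‖f s‖ ≤ C) : ‖∫ s in (0 : ℝ)..τ, f s‖ ≤ t * C := by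
  have hC : 0 ≤ C := (norm_nonneg _).trans (hf 0 ⟨le_rfl, hτ.1.trans hτ.2⟩)
  calc ‖∫ s in (0 : ℝ)..τ, f s‖ ≤ C * |τ - 0| :=
        intervalIntegral.norm_integral_le_of_norm_le_const fun s hs => by
          rw [uIoc_of_le hτ.1] at hs
          exact hf s ⟨hs.1.le, hs.2.trans hτ.2⟩
    _ ≤ t * C := by rw [sub_zero, abs_of_nonneg hτ.1, mul_comm]; gcongr; exact hτ.2

theorem stmt13_general (q : ℕ)
    (c : ℕ → ℂ)
    (B₁ B₂ : ℝ)
    (hB₁sum : Summable fun k : ℕ => ‖c k‖ * Real.pi ^ k)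
    (hB₁ : B₁ = ∑' k : ℕ, ‖c k‖ * Real.pi ^ k)
    (hB₂sum : Summable fun k : ℕ => ((k : ℝ) + 1) * ‖c (k + 1)‖ * Real.pi ^ k)
    (hB₂ : B₂ = ∑' k : ℕ, ((k : ℝ) + 1) * ‖c (k + 1)‖ * Real.pi ^ k)
    (t : ℝ)
    (A : ℝ → Mat q) (hA : ContinuousOn A (Icc 0 t))
    (M : ℝ) (hM : M = sSup ((fun s => ‖A s‖) '' Icc 0 t))
    (Q Q₁ Q₂ : ℝ → Mat q)
    (hQ₁c : ContinuousOn Q₁ (Icc 0 t))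
    (hQ₂c : ContinuousOn Q₂ (Icc 0 t))
    (hQ : ∀ s ∈ Icc (0:ℝ) t, adNorm q * ‖Q s‖ ≤ Real.pi)
    (hQ₁ : ∀ s ∈ Icc (0:ℝ) t, adNorm q * ‖Q₁ s‖ ≤ Real.pi)
    (hQ₂ : ∀ s ∈ Icc (0:ℝ) t, adNorm q * ‖Q₂ s‖ ≤ Real.pi) :
    (∀ τ ∈ Icc (0:ℝ) t, ‖∫ s in (0:ℝ)..τ, gAd c (Q s) (A s)‖ ≤ t * M * B₁) ∧
    (∀ τ ∈ Icc (0:ℝ) t,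
      ‖(∫ s in (0:ℝ)..τ, gAd c (Q₁ s) (A s)) - ∫ s in (0:ℝ)..τ, gAd c (Q₂ s) (A s)‖ ≤
        t * M * B₂ * adNorm q * sSup ((fun s => ‖Q₁ s - Q₂ s‖) '' Icc 0 t)) := by
  set S := sSup ((fun s => ‖Q₁ s - Q₂ s‖) '' Icc 0 t)
  have hAM : ∀ s ∈ Icc 0 t, ‖A s‖ ≤ M := fun s hs =>
    hM ▸ le_csSup (isCompact_Icc.bddAbove_image hA.norm) (mem_image_of_mem _ hs)
  have hQS : ∀ s ∈ Icc 0 t, ‖Q₁ s - Q₂ s‖ ≤ S := fun s hs =>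
    le_csSup (isCompact_Icc.bddAbove_image (hQ₁c.sub hQ₂c).norm) (mem_image_of_mem _ hs)
  have hB₁0 : 0 ≤ B₁ := hB₁ ▸ tsum_nonneg fun k => by positivity
  have hB₂0 : 0 ≤ B₂ := hB₂ ▸ tsum_nonneg fun k => by positivity
  have hgAd : ∀ s ∈ Icc 0 t, ‖gAd c (Q s) (A s)‖ ≤ B₁ * ‖A s‖ := fun s hs =>
    hB₁ ▸ norm_gAd_le hB₁sum (hQ s hs) _
  have hgAd_sub : ∀ s ∈ Icc 0 t, ‖gAd c (Q₁ s) (A s) - gAd c (Q₂ s) (A s)‖ ≤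
      B₂ * (adNorm q * ‖Q₁ s - Q₂ s‖) * ‖A s‖ := fun s hs =>
    hB₂ ▸ norm_gAd_sub_gAd_le hB₁sum hB₂sum (hQ₁ s hs) (hQ₂ s hs) _
  refine ⟨fun τ hτ => ?_, fun τ hτ => ?_⟩
  · calc ‖∫ s in (0:ℝ)..τ, gAd c (Q s) (A s)‖ ≤ t * (B₁ * M) :=
          norm_intervalIntegral_le_of_norm_le_on_Icc hτ fun s hs =>
            (hgAd s hs).trans (mul_le_mul_of_nonneg_left (hAM s hs) hB₁0)
      _ = t * M * B₁ := by ring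
  · have hsub : Icc 0 τ ⊆ Icc 0 t := Icc_subset_Icc_right hτ.2
    rw [← intervalIntegral.integral_sub
      (((hQ₁c.gAd hA hB₁sum hB₂sum hQ₁).mono hsub).intervalIntegrable_of_Icc hτ.1)
      (((hQ₂c.gAd hA hB₁sum hB₂sum hQ₂).mono hsub).intervalIntegrable_of_Icc hτ.1)]
    calc _ ≤ t * (B₂ * (adNorm q * S) * M) :=
          norm_intervalIntegral_le_of_norm_le_on_Icc hτ fun s hs => (hgAd_sub s hs).trans <| by
            have := adNorm_nonneg q
            have hS : 0 ≤ S := (norm_nonneg _).trans (hQS s hs)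
            gcongr
            exacts [hQS s hs, hAM s hs]
      _ = t * M * B₂ * adNorm q * S := by ring

/-- Bounds for the Picard operator `𝒜(Q)(τ) = ∫₀^τ g(ad Q(s)) A(s) ds`:
if `‖ad‖·‖Q(s)‖ ≤ π` on `[0,t]` and `M = sup_{[0,t]} ‖A‖` then
`sup_{[0,t]} ‖𝒜(Q)‖ ≤ t M B₁` and
`sup_{[0,t]} ‖𝒜(Q₁) - 𝒜(Q₂)‖ ≤ t M B₂ ‖ad‖ sup_{[0,t]} ‖Q₁ - Q₂‖`. -/
theorem stmt13 (q : ℕ) (hq : 1 ≤ q)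
    (c : ℕ → ℂ)
    (hg : ∀ z : ℂ, ‖z‖ < 2 * Real.pi →
      HasSum (fun k => c k * z ^ k) (if z = 0 then 1 else z / (1 - Complex.exp (-z))))
    (B₁ B₂ : ℝ)
    (hB₁sum : Summable fun k : ℕ => ‖c k‖ * Real.pi ^ k)
    (hB₁ : B₁ = ∑' k : ℕ, ‖c k‖ * Real.pi ^ k)
    (hB₂sum : Summable fun k : ℕ => ((k : ℝ) + 1) * ‖c (k + 1)‖ * Real.pi ^ k)
    (hB₂ : B₂ = ∑' k : ℕ, ((k : ℝ) + 1) * ‖c (k + 1)‖ * Real.pi ^ k)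
    (t : ℝ) (ht : 0 < t)
    (A : ℝ → Mat q) (hA : ContinuousOn A (Icc 0 t))
    (M : ℝ) (hM : M = sSup ((fun s => ‖A s‖) '' Icc 0 t))
    (Q Q₁ Q₂ : ℝ → Mat q)
    (hQc : ContinuousOn Q (Icc 0 t)) (hQ₁c : ContinuousOn Q₁ (Icc 0 t))
    (hQ₂c : ContinuousOn Q₂ (Icc 0 t))
    (hQ : ∀ s ∈ Icc (0:ℝ) t, adNorm q * ‖Q s‖ ≤ Real.pi)
    (hQ₁ : ∀ s ∈ Icc (0:ℝ) t, adNorm q * ‖Q₁ s‖ ≤ Real.pi)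
    (hQ₂ : ∀ s ∈ Icc (0:ℝ) t, adNorm q * ‖Q₂ s‖ ≤ Real.pi) :
    (∀ τ ∈ Icc (0:ℝ) t, ‖∫ s in (0:ℝ)..τ, gAd c (Q s) (A s)‖ ≤ t * M * B₁) ∧
    (∀ τ ∈ Icc (0:ℝ) t,
      ‖(∫ s in (0:ℝ)..τ, gAd c (Q₁ s) (A s)) - ∫ s in (0:ℝ)..τ, gAd c (Q₂ s) (A s)‖ ≤
        t * M * B₂ * adNorm q * sSup ((fun s => ‖Q₁ s - Q₂ s‖) '' Icc 0 t)) :=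
  stmt13_general q c B₁ B₂ hB₁sum hB₁ hB₂sum hB₂ t A hA M hM Q Q₁ Q₂ hQ₁c hQ₂c hQ hQ₁ hQ₂
end
end

section
/- Let f : ℝⁿ → ℝ be smooth and let m ≥ 1 be an integer. Suppose (∂_μ f)(0) = 0 for every tuple μ with w(μ) < m (including the empty tuple, i.e. f(0) = 0). Then there exist constants C, r > 0 such that |f(z)| ≤ C · ( Σ_{i=1}^n |z_i|^{1/w_i} )^m for every z ∈ ℝⁿ with |z| ≤ r. (That is, a function of weight ≥ m is O(ρ^m) for the anisotropic homogeneous norm ρ(z) = Σ_i |z_i|^{1/w_i}.) -/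
open MeasureTheory Set

noncomputable section

/-- The iterated partial derivative `∂_μ f = ∂_{μ₁} ⋯ ∂_{μⱼ} f` of a real-valued function
on `ℝⁿ`, for a tuple `μ` encoded as a list (`∂_∅ f = f`). -/
def pdIter {n : ℕ} (μ : List (Fin n)) (f : Euc n → ℝ) : Euc n → ℝ :=
  μ.foldr (fun k g => fun z => fderiv ℝ g z (EuclideanSpace.single k 1)) f

/-- The anisotropic homogeneous norm. -/
def rhoW {n : ℕ} (w : Fin n → ℕ) (z : Euc n) : ℝ := ∑ i, |z i| ^ ((w i : ℝ))⁻¹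

lemma rhoW_nonneg {n : ℕ} (w : Fin n → ℕ) (z : Euc n) : 0 ≤ rhoW w z :=
  Finset.sum_nonneg fun i _ => Real.rpow_nonneg (abs_nonneg _) _

lemma coord_abs_le_norm {n : ℕ} (z : Euc n) (i : Fin n) : |z i| ≤ ‖z‖ := by
  rw [EuclideanSpace.norm_eq, ← Real.sqrt_sq_eq_abs]
  apply Real.sqrt_le_sqrt
  have := Finset.single_le_sum (f := fun j => ‖z j‖ ^ 2)
    (fun j _ => sq_nonneg _) (Finset.mem_univ i)
  simpa [Real.norm_eq_abs, sq_abs] using this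

/-- `|zᵢ| ≤ ρ(z)^{wᵢ}`. -/
lemma coord_le_rhoW_pow {n : ℕ} (w : Fin n → ℕ) (hw : ∀ i, 1 ≤ w i) (z : Euc n) (i : Fin n) :
    |z i| ≤ (rhoW w z) ^ (w i) := by
  have h1 : |z i| ^ ((w i : ℝ))⁻¹ ≤ rhoW w z :=
    Finset.single_le_sum (f := fun j => |z j| ^ ((w j : ℝ))⁻¹)
      (fun j _ => Real.rpow_nonneg (abs_nonneg _) _) (Finset.mem_univ i)
  have hwi : (w i : ℝ) ≠ 0 := by
    have := hw i; positivity
  have h2 : (|z i| ^ ((w i : ℝ))⁻¹) ^ (w i) = |z i| := by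
    rw [← Real.rpow_natCast (|z i| ^ ((w i : ℝ))⁻¹) (w i), ← Real.rpow_mul (abs_nonneg _)]
    rw [inv_mul_cancel₀ hwi, Real.rpow_one]
  calc |z i| = (|z i| ^ ((w i : ℝ))⁻¹) ^ (w i) := h2.symm
    _ ≤ (rhoW w z) ^ (w i) :=
      pow_le_pow_left₀ (Real.rpow_nonneg (abs_nonneg _) _) h1 _

/-- `ρ(t•z) ≤ ρ(z)` for `|t| ≤ 1`. -/
lemma rhoW_smul_le {n : ℕ} (w : Fin n → ℕ) {t : ℝ} (ht : |t| ≤ 1) (z : Euc n) :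
    rhoW w (t • z) ≤ rhoW w z := by
  apply Finset.sum_le_sum
  intro i _
  apply Real.rpow_le_rpow (abs_nonneg _) _ (by positivity)
  have : (t • z) i = t * z i := rfl
  rw [this, abs_mul]
  calc |t| * |z i| ≤ 1 * |z i| := by
        exact mul_le_mul_of_nonneg_right ht (abs_nonneg _)
    _ = |z i| := one_mul _

/-- `ρ(z) ≤ n` when all coordinates are at most 1. -/
lemma rhoW_le_card {n : ℕ} (w : Fin n → ℕ) (z : Euc n) (hz : ∀ i, |z i| ≤ 1) :
    rhoW w z ≤ (n : ℝ) := by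
  calc rhoW w z ≤ ∑ _i : Fin n, (1 : ℝ) := by
        apply Finset.sum_le_sum
        intro i _
        exact Real.rpow_le_one (abs_nonneg _) (hz i) (by positivity)
    _ = n := by simp

lemma pdIter_append_single {n : ℕ} (μ : List (Fin n)) (i : Fin n) (f : Euc n → ℝ) :
    pdIter (μ ++ [i]) f = pdIter μ (fun z => fderiv ℝ f z (EuclideanSpace.single i 1)) := by
  simp [pdIter, List.foldr_append]

/-- The key lemma, by strong induction on `m` (with `m = 0` allowed). -/
lemma key_lemma (n : ℕ) (hn : 1 ≤ n) (w : Fin n → ℕ) (hw : ∀ i, 1 ≤ w i) :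
    ∀ m : ℕ, ∀ f : Euc n → ℝ, ContDiff ℝ (⊤ : ℕ∞) f →
    (∀ μ : List (Fin n), (μ.map w).sum < m → pdIter μ f 0 = 0) →
    ∃ C > (0:ℝ), ∃ r > (0:ℝ), r ≤ 1 ∧ ∀ z : Euc n, ‖z‖ ≤ r → |f z| ≤ C * (rhoW w z) ^ m := by
  haveI : Nonempty (Fin n) := ⟨⟨0, hn⟩⟩
  intro m
  induction m using Nat.strong_induction_on with
  | _ m IH =>
  intro f hf hvan
  rcases Nat.eq_zero_or_pos m with hm0 | hmpos
  · -- base case: continuity bound on the closed unit ball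
    subst hm0
    obtain ⟨M, hM⟩ := (isCompact_closedBall (0 : Euc n) 1).exists_bound_of_continuousOn
      (hf.continuous.continuousOn)
    have hM0 : 0 ≤ M := le_trans (norm_nonneg _) (hM 0 (Metric.mem_closedBall_self zero_le_one))
    refine ⟨M + 1, by linarith, 1, one_pos, le_refl 1, fun z hz => ?_⟩
    have := hM z (by simpa [Metric.mem_closedBall, dist_eq_norm] using hz)
    rw [Real.norm_eq_abs] at this
    simpa using by linarith
  · -- inductive step
    -- the partial derivatives
    set g : Fin n → Euc n → ℝ :=
      fun i z => fderiv ℝ f z (EuclideanSpace.single i 1) with hgdef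
    have hg : ∀ i, ContDiff ℝ (⊤ : ℕ∞) (g i) := fun i =>
      (hf.fderiv_right (by simp)).clm_apply contDiff_const
    have hgvan : ∀ i, ∀ μ : List (Fin n), (μ.map w).sum < m - w i → pdIter μ (g i) 0 = 0 := by
      intro i μ hμ
      rw [← pdIter_append_single]
      apply hvan
      have : ((μ ++ [i]).map w).sum = (μ.map w).sum + w i := by simp
      omega
    have H : ∀ i : Fin n, ∃ C > (0:ℝ), ∃ r > (0:ℝ), r ≤ 1 ∧
        ∀ z : Euc n, ‖z‖ ≤ r → |g i z| ≤ C * (rhoW w z) ^ (m - w i) := by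
      intro i
      exact IH (m - w i) (by have := hw i; omega) (g i) (hg i) (hgvan i)
    choose C hC r hr hr1 hb using H
    -- radius
    set R : ℝ := Finset.univ.inf' Finset.univ_nonempty r with hRdef
    have hR0 : 0 < R := by
      rw [hRdef, Finset.lt_inf'_iff]
      exact fun i _ => hr i
    have hR1 : R ≤ 1 := le_trans (Finset.inf'_le r (Finset.mem_univ (Classical.arbitrary _)))
      (hr1 _)
    have hRle : ∀ i, R ≤ r i := fun i => Finset.inf'_le r (Finset.mem_univ i)
    -- constant
    set C' : ℝ := ∑ i, C i * (n : ℝ) ^ (w i) with hC'def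
    have hC'pos : 0 < C' := by
      apply Finset.sum_pos
      · intro i _
        have hn1 : (1:ℝ) ≤ (n:ℝ) := by exact_mod_cast hn
        exact mul_pos (hC i) (pow_pos (by linarith) _)
      · exact Finset.univ_nonempty
    refine ⟨C', hC'pos, R, hR0, hR1, fun z hz => ?_⟩
    -- coordinates are ≤ 1
    have hz1 : ∀ i, |z i| ≤ 1 := fun i =>
      le_trans (coord_abs_le_norm z i) (le_trans hz hR1)
    have hrho_n : rhoW w z ≤ (n : ℝ) := rhoW_le_card w z hz1
    have hrho0 : 0 ≤ rhoW w z := rhoW_nonneg w z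
    have hn1 : (1:ℝ) ≤ (n:ℝ) := by exact_mod_cast hn
    -- per-coordinate estimate
    have keyi : ∀ i : Fin n, |z i| * (rhoW w z) ^ (m - w i) ≤
        (n : ℝ) ^ (w i) * (rhoW w z) ^ m := by
      intro i
      rcases le_or_gt (w i) m with hle | hgt
      · have h1 : |z i| ≤ (rhoW w z) ^ (w i) := coord_le_rhoW_pow w hw z i
        have h2 : (rhoW w z) ^ (w i) * (rhoW w z) ^ (m - w i) = (rhoW w z) ^ m := by
          rw [← pow_add]
          congr 1
          omega
        calc |z i| * (rhoW w z) ^ (m - w i)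
            ≤ (rhoW w z) ^ (w i) * (rhoW w z) ^ (m - w i) :=
              mul_le_mul_of_nonneg_right h1 (by positivity)
          _ = 1 * (rhoW w z) ^ m := by rw [h2, one_mul]
          _ ≤ (n : ℝ) ^ (w i) * (rhoW w z) ^ m :=
              mul_le_mul_of_nonneg_right (one_le_pow₀ hn1) (by positivity)
      · have he : m - w i = 0 := by omega
        rw [he, pow_zero, mul_one]
        have h1 : |z i| ≤ (rhoW w z) ^ (w i) := coord_le_rhoW_pow w hw z i
        have h2 : (rhoW w z) ^ (w i) = (rhoW w z) ^ m * (rhoW w z) ^ (w i - m) := by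
          rw [← pow_add]
          congr 1
          omega
        have h3 : (rhoW w z) ^ (w i - m) ≤ (n : ℝ) ^ (w i - m) :=
          pow_le_pow_left₀ hrho0 hrho_n _
        have h4 : (n : ℝ) ^ (w i - m) ≤ (n : ℝ) ^ (w i) :=
          pow_le_pow_right₀ hn1 (by omega)
        calc |z i| ≤ (rhoW w z) ^ m * (rhoW w z) ^ (w i - m) := by rw [← h2]; exact h1
          _ ≤ (rhoW w z) ^ m * (n : ℝ) ^ (w i) := by
              apply mul_le_mul_of_nonneg_left (le_trans h3 h4) (by positivity)
          _ = (n : ℝ) ^ (w i) * (rhoW w z) ^ m := mul_comm _ _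
    -- the derivative along the segment
    set F : ℝ → ℝ := fun t => f (t • z) with hFdef
    have hd : ∀ t : ℝ, HasDerivAt F ((fderiv ℝ f (t • z)) z) t := by
      intro t
      have h1 : HasDerivAt (fun s : ℝ => s • z) z t := by
        simpa using (hasDerivAt_id t).smul_const z
      exact ((hf.differentiable (by simp) (t • z)).hasFDerivAt).comp_hasDerivAt t h1
    -- bound on the derivative
    have hbound : ∀ t ∈ Ico (0:ℝ) 1, ‖(fderiv ℝ f (t • z)) z‖ ≤ C' * (rhoW w z) ^ m := by
      intro t ht
      have ht1 : |t| ≤ 1 := by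
        rw [abs_le]; constructor <;> [linarith [ht.1]; linarith [ht.2]]
      have htz : ‖t • z‖ ≤ R := by
        rw [norm_smul, Real.norm_eq_abs]
        calc |t| * ‖z‖ ≤ 1 * ‖z‖ := mul_le_mul_of_nonneg_right ht1 (norm_nonneg _)
          _ = ‖z‖ := one_mul _
          _ ≤ R := hz
      -- decompose z into basis vectors
      have hzdec : ∑ i, z i • EuclideanSpace.single i (1:ℝ) = z := by
        have := (EuclideanSpace.basisFun (Fin n) ℝ).sum_repr z
        simpa [EuclideanSpace.basisFun_apply, EuclideanSpace.basisFun_repr] using this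
      have happ : (fderiv ℝ f (t • z)) z = ∑ i, z i * g i (t • z) := by
        have h1 : ∑ i, z i * g i (t • z)
            = (fderiv ℝ f (t • z)) (∑ i, z i • EuclideanSpace.single i (1:ℝ)) := by
          rw [map_sum]
          refine Finset.sum_congr rfl fun i _ => ?_
          rw [ContinuousLinearMap.map_smul]
          rfl
        rw [h1, hzdec]
      rw [happ, Real.norm_eq_abs]
      calc |∑ i, z i * g i (t • z)| ≤ ∑ i, |z i * g i (t • z)| :=
            Finset.abs_sum_le_sum_abs _ _
        _ ≤ ∑ i, C i * ((n:ℝ) ^ (w i) * (rhoW w z) ^ m) := by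
            apply Finset.sum_le_sum
            intro i _
            rw [abs_mul]
            have hgi : |g i (t • z)| ≤ C i * (rhoW w (t • z)) ^ (m - w i) :=
              hb i (t • z) (le_trans htz (hRle i))
            have hmon : (rhoW w (t • z)) ^ (m - w i) ≤ (rhoW w z) ^ (m - w i) :=
              pow_le_pow_left₀ (rhoW_nonneg _ _) (rhoW_smul_le w ht1 z) _
            calc |z i| * |g i (t • z)| ≤ |z i| * (C i * (rhoW w z) ^ (m - w i)) := by
                  apply mul_le_mul_of_nonneg_left _ (abs_nonneg _)
                  exact le_trans hgi (mul_le_mul_of_nonneg_left hmon (le_of_lt (hC i)))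
              _ = C i * (|z i| * (rhoW w z) ^ (m - w i)) := by ring
              _ ≤ C i * ((n:ℝ) ^ (w i) * (rhoW w z) ^ m) :=
                  mul_le_mul_of_nonneg_left (keyi i) (le_of_lt (hC i))
        _ = C' * (rhoW w z) ^ m := by
            rw [hC'def, Finset.sum_mul]
            congr 1
            ext i
            ring
    -- mean value inequality
    have hmv := norm_image_sub_le_of_norm_deriv_le_segment'
      (f := F) (f' := fun t => (fderiv ℝ f (t • z)) z) (C := C' * (rhoW w z) ^ m)
      (a := 0) (b := 1)
      (fun t _ => (hd t).hasDerivWithinAt) hbound 1 (by norm_num)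
    have hF1 : F 1 = f z := by rw [hFdef]; simp
    have hF0 : F 0 = 0 := by
      rw [hFdef]
      simp only [zero_smul]
      exact hvan [] (by simpa using hmpos)
    rw [hF1, hF0, sub_zero, Real.norm_eq_abs] at hmv
    simpa using hmv

/-- If all weighted partial derivatives `∂_μ f` with `w(μ) < m` vanish
at `0`, then `|f(z)| ≤ C ρ(z)^m` near `0`, where `ρ(z) = Σᵢ |zᵢ|^{1/wᵢ}` is the anisotropic
homogeneous norm attached to the weights `w₁, …, w_n ≥ 1`. -/
theorem stmt14 (n : ℕ) (hn : 1 ≤ n)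
    (w : Fin n → ℕ) (hw : ∀ i, 1 ≤ w i)
    (f : Euc n → ℝ) (hf : ContDiff ℝ (⊤ : ℕ∞) f)
    (m : ℕ) (hm : 1 ≤ m)
    (hvan : ∀ μ : List (Fin n), (μ.map w).sum < m → pdIter μ f 0 = 0) :
    ∃ C > (0:ℝ), ∃ r > (0:ℝ), ∀ z : Euc n, ‖z‖ ≤ r →
      |f z| ≤ C * (∑ i, |z i| ^ ((w i : ℝ))⁻¹) ^ m := by
  obtain ⟨C, hC, r, hr, _, hb⟩ := key_lemma n hn w hw m f hf hvan
  exact ⟨C, hC, r, hr, fun z hz => hb z hz⟩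

end
end
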